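/- arXiv:1809.09902 — 9 statements merged into one kernel-verified Lean document; each statement's English description precedes it below -/
import Mathlib

section
/- Let (A, φ) be a Frobenius algebra, M a simple left A-module with annihilator A_M = {a ∈ A : aM = 0}, and γ ∈ A* a functional belonging to M (i.e., γ(A_M) = 0). Set γ* = φ⁻¹(γ). Then A_M · γ* = 0; consequently, for any left A-module N, the submodule A·γ*·N is M-homogeneous (a sum of submodules isomorphic to M). -/
/-! The Frobenius relation gives `φ (b * φ⁻¹ γ) x = γ (x * b)`. The annihilator of `M` is a left
ideal, so for `b` in it the right-hand side vanishes for every `x`, and `φ` is injective. -/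

theorem mul_symm_eq_zero_of_forall_apply_mul_eq_zero {R A : Type*} [CommRing R] [Ring A]
    [Algebra R A] (φ : A ≃ₗ[R] Module.Dual R A)
    (hφ : ∀ a b x : A, φ (a * b) x = φ b (x * a)) {γ : Module.Dual R A} {b : A}
    (hb : ∀ x : A, γ (x * b) = 0) : b * φ.symm γ = 0 := by
  have hφb : φ (b * φ.symm γ) = 0 := by
    ext x
    rw [hφ, φ.apply_symm_apply]
    exact hb x
  simpa using congrArg φ.symm hφb

theorem frobenius_annihilator_kills_inverse_general
    {A : Type*} [Ring A] [Algebra ℂ A]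
    (φ : A ≃ₗ[ℂ] Module.Dual ℂ A)
    (hφ : ∀ a b x : A, φ (a * b) x = φ b (x * a))
    (M : Type*) [AddCommGroup M] [Module A M]
    (γ : Module.Dual ℂ A)
    (hγ : ∀ a : A, (∀ m : M, a • m = 0) → γ a = 0) :
    (∀ b : A, (∀ m : M, b • m = 0) → b * φ.symm γ = 0) ∧
    (∀ (N : Type*) [AddCommGroup N] [Module A N],
      ∀ b : A, (∀ m : M, b • m = 0) →
        ∀ (a : A) (n : N), (b * (a * φ.symm γ)) • n = 0) := by
  have annihilator_mul_symm : ∀ b : A, (∀ m : M, b • m = 0) → b * φ.symm γ = 0 :=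
    fun b hb => mul_symm_eq_zero_of_forall_apply_mul_eq_zero φ hφ fun x =>
      hγ (x * b) fun m => by rw [mul_smul, hb m, smul_zero]
  refine ⟨annihilator_mul_symm, fun N _ _ b hb a n => ?_⟩
  have hba : b * a * φ.symm γ = 0 :=
    annihilator_mul_symm (b * a) fun m => by rw [mul_smul, hb]
  rw [← mul_assoc, hba, zero_smul]

/-- Let `(A, φ)` be a Frobenius algebra, `M` a simple left `A`-module and
`γ ∈ A*` a functional belonging to `M` (vanishing on the annihilator of `M`).  With
`γ* = φ⁻¹(γ)` one has `A_M · γ* = 0`; consequently for any left `A`-module `N` the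
submodule `A·γ*·N` is `M`-homogeneous, i.e. `A_M · (A·γ*·N) = 0`. -/
theorem frobenius_annihilator_kills_inverse
    {A : Type*} [Ring A] [Algebra ℂ A] [FiniteDimensional ℂ A]
    (φ : A ≃ₗ[ℂ] Module.Dual ℂ A)
    (hφ : ∀ a b x : A, φ (a * b) x = φ b (x * a))
    (M : Type*) [AddCommGroup M] [Module A M] [IsSimpleModule A M]
    (γ : Module.Dual ℂ A)
    (hγ : ∀ a : A, (∀ m : M, a • m = 0) → γ a = 0) :
    (∀ b : A, (∀ m : M, b • m = 0) → b * φ.symm γ = 0) ∧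
    (∀ (N : Type*) [AddCommGroup N] [Module A N],
      ∀ b : A, (∀ m : M, b • m = 0) →
        ∀ (a : A) (n : N), (b * (a * φ.symm γ)) • n = 0) :=
  frobenius_annihilator_kills_inverse_general φ hφ M γ hγ
end

section
/- Let (A, φ) be a Frobenius algebra, M and N simple left A-modules, and γ, μ ∈ A* functionals belonging to M and N respectively (i.e., vanishing on the respective annihilators). Set γ* = φ⁻¹(γ). If γ*·N ≠ 0, then M ≅ N. In particular, if μ(γ*) ≠ 0 then M ≅ N. -/
/-!
The Frobenius identity `φ (a * b) x = φ b (x * a)` gives `φ (a * γ*) = γ (· * a)`, which vanishes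
for `a` in the annihilator of `M` (a left ideal), so `Ann M * γ* = 0`. If `γ* • n ≠ 0`, this
vector generates `N`, and since `Ann M` is two-sided it kills all of `N`: `Ann M ≤ Ann N`.
Over an Artinian ring, `A ⧸ Ann M` embeds into a finite power of `M`, so it is semisimple and
each of its simple quotients, `N` among them, is isomorphic to `M`. Finally `μ γ* ≠ 0` means that
`γ*` does not annihilate `N`.
-/

open LinearMap

theorem Module.exists_finset_iInf_ker_toSpanSingleton_le_annihilator
    (R M : Type*) [Ring R] [IsArtinianRing R] [AddCommGroup M] [Module R M] :
    ∃ s : Finset M, ⨅ m ∈ s, ker (toSpanSingleton R M m) ≤ Module.annihilator R M := by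
  classical
  obtain ⟨_, ⟨s, rfl⟩, hmin⟩ := wellFounded_lt.has_min
    (Set.range fun s : Finset M ↦ ⨅ m ∈ s, ker (toSpanSingleton R M m)) ⟨_, ∅, rfl⟩
  refine ⟨s, fun a ha ↦ Module.mem_annihilator.mpr fun m ↦ ?_⟩
  have hstable : ker (toSpanSingleton R M m) ⊓ ⨅ m ∈ s, ker (toSpanSingleton R M m) =
      ⨅ m ∈ s, ker (toSpanSingleton R M m) := by
    by_contra hne
    exact hmin _ ⟨insert m s, Finset.iInf_insert ..⟩ (inf_le_right.lt_of_ne hne)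
  exact inf_eq_right.mp hstable ha

theorem IsSimpleModule.nonempty_linearEquiv_of_ne_zero_pi
    {R M N ι : Type*} [Ring R] [AddCommGroup M] [Module R M] [IsSimpleModule R M]
    [AddCommGroup N] [Module R N] [IsSimpleModule R N]
    (f : N →ₗ[R] (ι → M)) (hf : f ≠ 0) : Nonempty (N ≃ₗ[R] M) := by
  obtain ⟨i, hi⟩ : ∃ i, proj i ∘ₗ f ≠ 0 := by
    by_contra! h
    exact hf (LinearMap.ext fun x ↦ funext fun i ↦ LinearMap.congr_fun (h i) x)
  exact ⟨.ofBijective _ (bijective_of_ne_zero hi)⟩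

theorem IsSimpleModule.nonempty_linearEquiv_of_annihilator_le
    {R M N : Type*} [Ring R] [IsArtinianRing R]
    [AddCommGroup M] [Module R M] [IsSimpleModule R M]
    [AddCommGroup N] [Module R N] [IsSimpleModule R N]
    (h : Module.annihilator R M ≤ Module.annihilator R N) : Nonempty (M ≃ₗ[R] N) := by
  obtain ⟨s, hs⟩ := Module.exists_finset_iInf_ker_toSpanSingleton_le_annihilator R M
  let Θ : R →ₗ[R] (s → M) := LinearMap.pi fun m ↦ toSpanSingleton R M m
  have hΘ : ker Θ ≤ Module.annihilator R M := by
    rw [iInf_subtype'] at hs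
    rwa [ker_pi]
  have := IsSimpleModule.nontrivial R N
  obtain ⟨n, hn⟩ := exists_ne (0 : N)
  have hker : ker Θ ≤ ker (toSpanSingleton R N n) :=
    fun a ha ↦ Module.mem_annihilator.mp (h (hΘ ha)) n
  -- `range Θ ≅ R ⧸ ker Θ` is semisimple, so the surjection `f` onto `N` splits.
  let f : range Θ →ₗ[R] N := (ker Θ).liftQ _ hker ∘ₗ Θ.quotKerEquivRange.symm.toLinearMap
  have hf : Function.Surjective f := by
    have hlift : Function.Surjective ((ker Θ).liftQ _ hker) := by
      rw [← range_eq_top, Submodule.range_liftQ, range_eq_top]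
      exact IsSimpleModule.toSpanSingleton_surjective R hn
    exact hlift.comp Θ.quotKerEquivRange.symm.surjective
  obtain ⟨g, hg⟩ := IsSemisimpleModule.lifting_property f hf LinearMap.id
  refine (nonempty_linearEquiv_of_ne_zero_pi ((range Θ).subtype ∘ₗ g) fun h0 ↦ hn ?_).map
    LinearEquiv.symm
  have hgn : g n = 0 := Subtype.ext (LinearMap.congr_fun h0 n)
  calc n = f (g n) := (LinearMap.congr_fun hg n).symm
    _ = 0 := by rw [hgn, map_zero]

theorem Ideal.le_annihilator_of_forall_mul_eq_zero
    {R N : Type*} [Ring R] [AddCommGroup N] [Module R N] [IsSimpleModule R N]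
    {I : Ideal R} [I.IsTwoSided] {g : R} (hg : ∀ a ∈ I, a * g = 0) {n : N} (hn : g • n ≠ 0) :
    I ≤ Module.annihilator R N := by
  refine fun a ha ↦ Module.mem_annihilator.mpr fun n' ↦ ?_
  obtain ⟨c, rfl⟩ := IsSimpleModule.toSpanSingleton_surjective R hn n'
  rw [toSpanSingleton_apply, smul_smul, smul_smul, hg _ (I.mul_mem_right c ha), zero_smul]

theorem mul_symm_eq_zero_of_forall_mem_eq_zero
    {K A : Type*} [CommSemiring K] [Semiring A] [Algebra K A]
    (φ : A ≃ₗ[K] Module.Dual K A) (hφ : ∀ a b x : A, φ (a * b) x = φ b (x * a))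
    {I : Submodule A A} {γ : Module.Dual K A} (hγ : ∀ a ∈ I, γ a = 0) {a : A} (ha : a ∈ I) :
    a * φ.symm γ = 0 :=
  φ.map_eq_zero_iff.mp <| LinearMap.ext fun x ↦ by
    rw [hφ, φ.apply_symm_apply, LinearMap.zero_apply]
    exact hγ _ (I.smul_mem x ha)

/-- Let `(A, φ)` be a Frobenius algebra, `M`, `N` simple left `A`-modules,
and `γ`, `μ` functionals belonging to `M`, `N` respectively.  Set `γ* = φ⁻¹(γ)`.
If `γ*·N ≠ 0` then `M ≅ N`; in particular if `μ(γ*) ≠ 0` then `M ≅ N`. -/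
theorem frobenius_orthogonality
    {A : Type*} [Ring A] [Algebra ℂ A] [FiniteDimensional ℂ A]
    (φ : A ≃ₗ[ℂ] Module.Dual ℂ A)
    (hφ : ∀ a b x : A, φ (a * b) x = φ b (x * a))
    (M : Type*) [AddCommGroup M] [Module A M] [IsSimpleModule A M]
    (N : Type*) [AddCommGroup N] [Module A N] [IsSimpleModule A N]
    (γ μ : Module.Dual ℂ A)
    (hγ : ∀ a : A, (∀ m : M, a • m = 0) → γ a = 0)
    (hμ : ∀ a : A, (∀ n : N, a • n = 0) → μ a = 0) :
    ((∃ n : N, φ.symm γ • n ≠ 0) → Nonempty (M ≃ₗ[A] N)) ∧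
    (μ (φ.symm γ) ≠ 0 → Nonempty (M ≃ₗ[A] N)) := by
  have : IsArtinianRing A := IsArtinianRing.of_finite ℂ A
  have hann : ∀ a ∈ Module.annihilator A M, a * φ.symm γ = 0 := fun _ ↦
    mul_symm_eq_zero_of_forall_mem_eq_zero φ hφ fun b hb ↦ hγ b (Module.mem_annihilator.mp hb)
  have key : (∃ n : N, φ.symm γ • n ≠ 0) → Nonempty (M ≃ₗ[A] N) := fun ⟨_, hn⟩ ↦
    IsSimpleModule.nonempty_linearEquiv_of_annihilator_le
      (Ideal.le_annihilator_of_forall_mul_eq_zero hann hn)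
  refine ⟨key, fun hμγ ↦ key ?_⟩
  by_contra! hγN
  exact hμγ (hμ _ hγN)
end

section
/- Let (A, φ) be a Frobenius algebra, M and N simple left A-modules with characters χ and ζ. If (aᵢ), (bᵢ) are φ-dual bases of A and Σᵢ χ(aᵢ)ζ(bᵢ) ≠ 0, then M ≅ N and χ = ζ. -/
/-!
The Casimir element `∑ aᵢ ⊗ bᵢ` of a pair of dual bases satisfies `∑ aᵢ x ⊗ bᵢ = ∑ aᵢ ⊗ x bᵢ`,
so the average `f ↦ ∑ bᵢ ∘ f ∘ aᵢ` turns every `ℂ`-linear map `M → N` into an `A`-linear one.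
Under `Hom_ℂ(M, N) ≅ M* ⊗ N` this averaging operator has trace `∑ χ(aᵢ) ζ(bᵢ) ≠ 0`, so some
average is a nonzero `A`-linear map, hence an isomorphism by Schur's lemma, and isomorphic
modules have equal characters.
-/

/-- The character of a module: `a ↦ trace of the action of `a` on `M`, as a linear
functional on `A`. -/
noncomputable def charMap (A M : Type*) [Ring A] [Algebra ℂ A]
    [AddCommGroup M] [Module A M] [Module ℂ M]
    [SMulCommClass A ℂ M] [IsScalarTower ℂ A M] : Module.Dual ℂ A :=
  letI rep : A →ₗ[ℂ] (M →ₗ[ℂ] M) :=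
    { toFun := fun a =>
        { toFun := fun m => a • m
          map_add' := smul_add a
          map_smul' := fun c m => smul_comm a c m }
      map_add' := fun a b => LinearMap.ext fun m => add_smul a b m
      map_smul' := fun c a => LinearMap.ext fun m => smul_assoc c a m }
  (LinearMap.trace ℂ M).comp rep

open LinearMap TensorProduct

section CompLeftRight

variable {R M N : Type*} [CommRing R] [AddCommGroup M] [Module R M] [AddCommGroup N] [Module R N]

def compLeftRight (g : N →ₗ[R] N) (h : M →ₗ[R] M) : (M →ₗ[R] N) →ₗ[R] (M →ₗ[R] N) where
  toFun f := g ∘ₗ f ∘ₗ h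
  map_add' _ _ := by ext; simp
  map_smul' _ _ := by ext; simp

@[simp]
lemma compLeftRight_apply (g : N →ₗ[R] N) (h : M →ₗ[R] M) (f : M →ₗ[R] N) :
    compLeftRight g h f = g ∘ₗ f ∘ₗ h := rfl

-- Under `Hom(M, N) ≃ M* ⊗ N` the operator `compLeftRight g h` becomes `hᵀ ⊗ g`.
theorem trace_compLeftRight [Module.Free R M] [Module.Finite R M] [Module.Free R N]
    [Module.Finite R N] (g : N →ₗ[R] N) (h : M →ₗ[R] M) :
    trace R _ (compLeftRight g h) = trace R M h * trace R N g := by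
  let e := dualTensorHomEquiv R M N
  have hconj :
      compLeftRight g h = e.conj (TensorProduct.map (Module.Dual.transpose (R := R) h) g) := by
    rw [LinearEquiv.conj_apply, LinearEquiv.eq_comp_toLinearMap_symm]
    refine TensorProduct.ext' fun φ n => ?_
    ext m
    simp [e, dualTensorHomEquiv, Module.Dual.transpose]
  rw [hconj, trace_conj' (M := Module.Dual R M ⊗[R] N) _ e, trace_tensorProduct',
    trace_transpose']

end CompLeftRight

section Casimir

variable {R A : Type*} [CommSemiring R] [Semiring A] [Algebra R A]
  {ι : Type*} [DecidableEq ι]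
  {β : A →ₗ[R] Module.Dual R A} {a b : Module.Basis ι R A}

lemma repr_left_eq_pairing (hdual : ∀ i j, β (b i) (a j) = if i = j then 1 else 0)
    (y : A) (j : ι) : a.repr y j = β (b j) y := by
  change a.coord j y = β (b j) y
  congr 1
  refine a.ext fun i => ?_
  simp [hdual, Finsupp.single_apply, eq_comm]

lemma repr_right_eq_pairing (hdual : ∀ i j, β (b i) (a j) = if i = j then 1 else 0)
    (z : A) (i : ι) : b.repr z i = β z (a i) := by
  change b.coord i z = β.flip (a i) z
  congr 1
  refine b.ext fun j => ?_
  simp [hdual, Finsupp.single_apply]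

theorem sum_mul_left_eq_sum_mul_right [Fintype ι] {V : Type*} [AddCommMonoid V] [Module R V]
    (hβ : ∀ x y z : A, β (x * y) z = β y (z * x))
    (hdual : ∀ i j, β (b i) (a j) = if i = j then 1 else 0)
    (G : A →ₗ[R] A →ₗ[R] V) (x : A) :
    ∑ i, G (a i * x) (b i) = ∑ j, G (a j) (x * b j) := by
  have expand_left : ∀ i, G (a i * x) (b i) = ∑ j, β (b j) (a i * x) • G (a j) (b i) := by
    intro i
    conv_lhs => rw [← a.sum_repr (a i * x)]
    simp [map_sum, repr_left_eq_pairing hdual]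
  have expand_right : ∀ j, G (a j) (x * b j) = ∑ i, β (b j) (a i * x) • G (a j) (b i) := by
    intro j
    conv_lhs => rw [← b.sum_repr (x * b j)]
    simp [map_sum, repr_right_eq_pairing hdual, hβ]
  simp only [expand_left, expand_right]
  exact Finset.sum_comm

end Casimir

section CasimirAverage

variable {K A M N : Type*} [CommRing K] [Ring A] [Algebra K A]
  [AddCommGroup M] [Module A M] [Module K M] [IsScalarTower K A M] [SMulCommClass A K M]
  [AddCommGroup N] [Module A N] [Module K N] [IsScalarTower K A N] [SMulCommClass A K N]
  {ι : Type*} [Fintype ι]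

variable (K M N) in
def casimirAverage (a b : ι → A) : (M →ₗ[K] N) →ₗ[K] (M →ₗ[K] N) :=
  ∑ i, compLeftRight (Algebra.lsmul K K N (b i)) (Algebra.lsmul K K M (a i))

lemma casimirAverage_apply_apply (a b : ι → A) (f : M →ₗ[K] N) (m : M) :
    casimirAverage K M N a b f m = ∑ i, b i • f (a i • m) := by
  simp [casimirAverage]

theorem trace_casimirAverage [Module.Free K M] [Module.Finite K M] [Module.Free K N]
    [Module.Finite K N] (a b : ι → A) :
    trace K _ (casimirAverage K M N a b) =
      ∑ i, trace K M (Algebra.lsmul K K M (a i)) * trace K N (Algebra.lsmul K K N (b i)) := by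
  simp only [casimirAverage, map_sum, trace_compLeftRight]

theorem casimirAverage_apply_smul [DecidableEq ι] {β : A →ₗ[K] Module.Dual K A}
    {a b : Module.Basis ι K A} (hβ : ∀ x y z : A, β (x * y) z = β y (z * x))
    (hdual : ∀ i j, β (b i) (a j) = if i = j then 1 else 0)
    (f : M →ₗ[K] N) (x : A) (m : M) :
    casimirAverage K M N a b f (x • m) = x • casimirAverage K M N a b f m := by
  let G : A →ₗ[K] A →ₗ[K] N := LinearMap.mk₂ K (fun p q => q • f (p • m))
    (fun p p' q => by rw [add_smul, map_add, smul_add])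
    (fun c p q => by rw [smul_assoc, map_smul, smul_comm])
    (fun p q q' => by rw [add_smul])
    (fun c p q => by rw [smul_assoc])
  calc casimirAverage K M N a b f (x • m)
      = ∑ i, G (a i * x) (b i) := by simp [casimirAverage_apply_apply, G, mul_smul]
    _ = ∑ j, G (a j) (x * b j) := sum_mul_left_eq_sum_mul_right hβ hdual G x
    _ = x • casimirAverage K M N a b f m := by
      simp [casimirAverage_apply_apply, G, Finset.smul_sum, mul_smul]

end CasimirAverage

section Character

variable {A M N : Type*} [Ring A] [Algebra ℂ A]
  [AddCommGroup M] [Module A M] [Module ℂ M] [SMulCommClass A ℂ M] [IsScalarTower ℂ A M]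
  [AddCommGroup N] [Module A N] [Module ℂ N] [SMulCommClass A ℂ N] [IsScalarTower ℂ A N]

lemma charMap_apply (x : A) : charMap A M x = trace ℂ M (Algebra.lsmul ℂ ℂ M x) := rfl

lemma charMap_congr (e : M ≃ₗ[A] N) : charMap A M = charMap A N := by
  ext x
  have hconj : Algebra.lsmul ℂ ℂ N x = (e.restrictScalars ℂ).conj (Algebra.lsmul ℂ ℂ M x) := by
    ext n
    simp [LinearEquiv.conj_apply]
  rw [charMap_apply, charMap_apply, hconj, trace_conj']

end Character

theorem frobenius_character_orthogonality_general
    {A : Type*} [Ring A] [Algebra ℂ A]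
    (φ : A ≃ₗ[ℂ] Module.Dual ℂ A)
    (hφ : ∀ a b x : A, φ (a * b) x = φ b (x * a))
    {ι : Type*} [Fintype ι] [DecidableEq ι]
    (Ba Bb : Module.Basis ι ℂ A)
    (hdual : ∀ i j, φ (Bb i) (Ba j) = if i = j then 1 else 0)
    (M : Type*) [AddCommGroup M] [Module A M] [Module ℂ M]
    [SMulCommClass A ℂ M] [IsScalarTower ℂ A M] [FiniteDimensional ℂ M]
    [IsSimpleModule A M]
    (N : Type*) [AddCommGroup N] [Module A N] [Module ℂ N]
    [SMulCommClass A ℂ N] [IsScalarTower ℂ A N] [FiniteDimensional ℂ N]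
    [IsSimpleModule A N]
    (h : ∑ i, charMap A M (Ba i) * charMap A N (Bb i) ≠ 0) :
    Nonempty (M ≃ₗ[A] N) ∧ charMap A M = charMap A N := by
  have hT : casimirAverage ℂ M N Ba Bb ≠ 0 := by
    intro h0
    apply h
    simp only [charMap_apply, ← trace_casimirAverage, h0, map_zero]
  obtain ⟨f, hf⟩ := DFunLike.ne_iff.mp hT
  let g : M →ₗ[A] N :=
    { casimirAverage ℂ M N Ba Bb f with map_smul' := casimirAverage_apply_smul hφ hdual f }
  have hg : g ≠ 0 := fun h0 => hf (LinearMap.ext fun m => LinearMap.congr_fun h0 m)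
  let e := LinearEquiv.ofBijective g (LinearMap.bijective_of_ne_zero hg)
  exact ⟨⟨e⟩, charMap_congr e⟩

/-- Let `(A, φ)` be a Frobenius algebra, `M`, `N` simple left `A`-modules
with characters `χ`, `ζ`.  If `(aᵢ)`, `(bᵢ)` are `φ`-dual bases and `∑ᵢ χ(aᵢ)ζ(bᵢ) ≠ 0`,
then `M ≅ N` and `χ = ζ`. -/
theorem frobenius_character_orthogonality
    {A : Type*} [Ring A] [Algebra ℂ A] [FiniteDimensional ℂ A]
    (φ : A ≃ₗ[ℂ] Module.Dual ℂ A)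
    (hφ : ∀ a b x : A, φ (a * b) x = φ b (x * a))
    {ι : Type*} [Fintype ι] [DecidableEq ι]
    (Ba Bb : Module.Basis ι ℂ A)
    (hdual : ∀ i j, φ (Bb i) (Ba j) = if i = j then 1 else 0)
    (M : Type*) [AddCommGroup M] [Module A M] [Module ℂ M]
    [SMulCommClass A ℂ M] [IsScalarTower ℂ A M] [FiniteDimensional ℂ M]
    [IsSimpleModule A M]
    (N : Type*) [AddCommGroup N] [Module A N] [Module ℂ N]
    [SMulCommClass A ℂ N] [IsScalarTower ℂ A N] [FiniteDimensional ℂ N]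
    [IsSimpleModule A N]
    (h : ∑ i, charMap A M (Ba i) * charMap A N (Bb i) ≠ 0) :
    Nonempty (M ≃ₗ[A] N) ∧ charMap A M = charMap A N :=
  frobenius_character_orthogonality_general φ hφ Ba Bb hdual M N h
end

section
/- Let A be a Frobenius ⋆-algebra. Then the irreducible characters {χ_M : M ∈ Sim(A)} form an orthogonal basis of the space of class functionals on A with respect to the induced form; explicitly, with α_M = φ⁻¹(χ_M), one has ⟨α_M, α_N⟩ = 0 for M ≇ N and ⟨α_M, α_M⟩ = |c_M|²⟨e_M, e_M⟩ where α_M = c_M e_M. -/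
/-!
Since `λ` is a trace and `⟨a, b⟩ = λ(a b⋆)` is positive definite, `φ : a ↦ λ(- · a)` is injective,
hence bijective, and `φ⁻¹` of a class functional is central. By Schur's lemma a central `z` acts on
the simple module `M` by a scalar `c`, and the defining properties of `e_M` turn this into
`z e_M = c e_M`. The `e_M` are pairwise orthogonal: if `e_M` acts nontrivially on `N` then
`e_M = e_N`, and both `M` and `N` are then isomorphic to any minimal left ideal inside `A e_M`.
Their complement `1 - ∑ e_M` is a central idempotent killing every simple module, so
`∑ e_M = 1`. Hence `α_M = c_M e_M` with `c_M ≠ 0` (as `χ_M(1) = dim M`), `⋆` fixes `e_M`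
(positivity excludes `e_M⋆ e_M = 0`), and `⟨α_M, α_N⟩ = c_M c̄_N λ(e_M e_N) = 0`. A central `z`
equals `∑ z e_M`, a combination of the `α_M`, so the characters span the class functionals;
evaluating at `e_M` shows that they are independent.
-/

universe v

section SimpleModule

variable {A M : Type*} [Ring A] [AddCommGroup M] [Module A M]

theorem forall_smul_eq_zero_or_forall_smul_eq_self [IsSimpleModule A M] {e : A}
    (he : IsIdempotentElem e) (hc : e ∈ Set.center A) :
    (∀ m : M, e • m = 0) ∨ ∀ m : M, e • m = m := by
  classical
  have : IsIdempotentElem (Module.End.smulLeft (M := M) e hc) :=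
    LinearMap.ext fun m => by simp [← mul_smul, he.eq]
  rcases IsIdempotentElem.iff_eq_zero_or_one.1 this with h | h
  · exact .inl fun m => LinearMap.congr_fun h m
  · exact .inr fun m => LinearMap.congr_fun h m

theorem IsIdempotentElem.mul_eq_self_of_mem_span_singleton {e x : A} (he : IsIdempotentElem e)
    (hx : x ∈ Submodule.span A {e}) : x * e = x := by
  obtain ⟨a, rfl⟩ := Submodule.mem_span_singleton.1 hx
  rw [smul_eq_mul, mul_assoc, he.eq]

theorem exists_isAtom_le_span_singleton [IsArtinianRing A] {e : A} (he : e ≠ 0) :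
    ∃ L : Submodule A A, IsAtom L ∧ L ≤ Submodule.span A {e} :=
  (eq_bot_or_exists_atom_le _).resolve_left (Submodule.span_singleton_eq_bot.not.2 he)

theorem eq_zero_of_forall_isSimpleModule_smul_eq_zero [IsArtinianRing A] [Small.{v} A] {u : A}
    (hu : IsIdempotentElem u) (hc : u ∈ Set.center A)
    (h : ∀ (N : Type v) [AddCommGroup N] [Module A N], IsSimpleModule A N → ∀ n : N, u • n = 0) :
    u = 0 := by
  by_contra hu0
  obtain ⟨L, hL, hLe⟩ := exists_isAtom_le_span_singleton hu0
  have := isSimpleModule_iff_isAtom.2 hL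
  let φ := Shrink.linearEquiv A L
  have hL_zero (x : L) : u • x = 0 := by
    simpa using congrArg φ (h (Shrink.{v} L) (.congr φ) (φ.symm x))
  refine hL.1 ((Submodule.eq_bot_iff L).2 fun x hx => ?_)
  have hux : u * x = x := by
    rw [← Semigroup.mem_center_iff.1 hc, hu.mul_eq_self_of_mem_span_singleton (hLe hx)]
  simpa [hux] using congrArg Subtype.val (hL_zero ⟨x, hx⟩)

end SimpleModule

/-- `e` is the primitive central idempotent `e_M` of the simple module `M`. -/
structure IsBlockIdempotent {A : Type*} [Ring A] (e : A) (M : Type*) [AddCommGroup M]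
    [Module A M] : Prop where
  isIdempotentElem : IsIdempotentElem e
  mem_center : e ∈ Set.center A
  smul_eq_self : ∀ m : M, e • m = m
  mul_eq_zero_of_forall_smul_eq_zero : ∀ a : A, (∀ m : M, a • m = 0) → a * e = 0

namespace IsBlockIdempotent

variable {A M N : Type*} [Ring A] [AddCommGroup M] [Module A M] [AddCommGroup N] [Module A N]
  {e f : A}

theorem ne_zero [Nontrivial M] (he : IsBlockIdempotent e M) : e ≠ 0 := by
  rintro rfl
  obtain ⟨m, hm⟩ := exists_ne (0 : M)
  exact hm (by rw [← he.smul_eq_self m, zero_smul])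

theorem mul_eq_mul_of_forall_smul_eq (he : IsBlockIdempotent e M) {a b : A}
    (hab : ∀ m : M, a • m = b • m) : a * e = b * e := by
  rw [← sub_eq_zero, ← sub_mul]
  exact he.mul_eq_zero_of_forall_smul_eq_zero _ fun m => by rw [sub_smul, hab, sub_self]

theorem forall_smul_eq_zero_or_eq [IsSimpleModule A M] [IsSimpleModule A N]
    (he : IsBlockIdempotent e M) (hf : IsBlockIdempotent f N) :
    (∀ n : N, e • n = 0) ∨ e = f := by
  have hec := Semigroup.mem_center_iff.1 he.mem_center
  refine (forall_smul_eq_zero_or_forall_smul_eq_self he.isIdempotentElem he.mem_center).imp_right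
    fun he_id => ?_
  have hef : e * f = f := by
    simpa using hf.mul_eq_mul_of_forall_smul_eq (a := e) (b := 1) (by simpa using he_id)
  rcases forall_smul_eq_zero_or_forall_smul_eq_self (M := M) hf.isIdempotentElem hf.mem_center
    with hf_zero | hf_id
  · have hfe : f * e = 0 := he.mul_eq_zero_of_forall_smul_eq_zero f hf_zero
    have := IsSimpleModule.nontrivial A N
    exact absurd (by rw [← hef, ← hec, hfe]) hf.ne_zero
  · have hfe : f * e = e := by
      simpa using he.mul_eq_mul_of_forall_smul_eq (a := f) (b := 1) (by simpa using hf_id)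
    rw [← hfe, hec, hef]

theorem nonempty_linearEquiv_of_isAtom [IsSimpleModule A M] (he : IsBlockIdempotent e M)
    {L : Submodule A A} (hL : IsAtom L) (hLe : L ≤ Submodule.span A {e}) :
    Nonempty (L ≃ₗ[A] M) := by
  have := isSimpleModule_iff_isAtom.2 hL
  obtain ⟨x, hx, m, hxm⟩ : ∃ x ∈ L, ∃ m : M, x • m ≠ 0 := by
    by_contra! h
    refine hL.1 ((Submodule.eq_bot_iff L).2 fun x hx => ?_)
    rw [← he.isIdempotentElem.mul_eq_self_of_mem_span_singleton (hLe hx)]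
    exact he.mul_eq_zero_of_forall_smul_eq_zero x (h x hx)
  have hψ : (LinearMap.toSpanSingleton A M m).comp L.subtype ≠ 0 :=
    fun h => hxm (LinearMap.congr_fun h ⟨x, hx⟩)
  exact ⟨.ofBijective _ (LinearMap.bijective_of_ne_zero hψ)⟩

theorem nonempty_linearEquiv [IsArtinianRing A] [IsSimpleModule A M] [IsSimpleModule A N]
    (hM : IsBlockIdempotent e M) (hN : IsBlockIdempotent e N) : Nonempty (M ≃ₗ[A] N) := by
  have := IsSimpleModule.nontrivial A M
  obtain ⟨L, hL, hLe⟩ := exists_isAtom_le_span_singleton hM.ne_zero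
  obtain ⟨φM⟩ := hM.nonempty_linearEquiv_of_isAtom hL hLe
  obtain ⟨φN⟩ := hN.nonempty_linearEquiv_of_isAtom hL hLe
  exact ⟨φM.symm.trans φN⟩

theorem smul_eq_zero_of_not_nonempty_linearEquiv [IsArtinianRing A] [IsSimpleModule A M]
    [IsSimpleModule A N] (he : IsBlockIdempotent e M) (hf : IsBlockIdempotent f N)
    (hMN : ¬ Nonempty (M ≃ₗ[A] N)) (n : N) : e • n = 0 := by
  rcases he.forall_smul_eq_zero_or_eq hf with h | rfl
  · exact h n
  · exact absurd (he.nonempty_linearEquiv hf) hMN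

theorem mul_eq_zero_of_not_nonempty_linearEquiv [IsArtinianRing A] [IsSimpleModule A M]
    [IsSimpleModule A N] (he : IsBlockIdempotent e M) (hf : IsBlockIdempotent f N)
    (hMN : ¬ Nonempty (M ≃ₗ[A] N)) : e * f = 0 :=
  hf.mul_eq_zero_of_forall_smul_eq_zero e (he.smul_eq_zero_of_not_nonempty_linearEquiv hf hMN)

theorem sum_eq_one [IsArtinianRing A] [Small.{v} A] {ι : Type*} [Fintype ι]
    {M : ι → Type v} [∀ i, AddCommGroup (M i)] [∀ i, Module A (M i)] {e : ι → A}
    (he : ∀ i, IsBlockIdempotent (e i) (M i)) (horth : OrthogonalIdempotents e)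
    (hcomplete : ∀ (N : Type v) [AddCommGroup N] [Module A N],
      IsSimpleModule A N → ∃ i, Nonempty (M i ≃ₗ[A] N)) :
    ∑ i, e i = 1 := by
  have hc : 1 - ∑ i, e i ∈ Subring.center A :=
    sub_mem (one_mem _) (sum_mem fun i _ => (he i).mem_center)
  have hu_mul (i : ι) : (1 - ∑ j, e j) * e i = 0 := by
    rw [← Subring.mem_center_iff.1 hc, mul_sub, mul_one,
      horth.mul_sum_of_mem (Finset.mem_univ i), sub_self]
  refine (sub_eq_zero.1 (eq_zero_of_forall_isSimpleModule_smul_eq_zero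
    horth.isIdempotentElem_sum.one_sub hc fun N _ _ hN n => ?_)).symm
  obtain ⟨i, ⟨φ⟩⟩ := hcomplete N hN
  rw [← φ.apply_symm_apply n, ← map_smul, ← (he i).smul_eq_self (φ.symm n), smul_smul, hu_mul,
    zero_smul, map_zero]

theorem exists_mul_eq_smul {K : Type*} [Field K] [IsAlgClosed K] [Algebra K A] [Module K M]
    [IsScalarTower K A M] [FiniteDimensional K M] [IsSimpleModule A M]
    (he : IsBlockIdempotent e M) {z : A} (hz : z ∈ Set.center A) : ∃ c : K, z * e = c • e := by
  obtain ⟨c, hc⟩ := (IsSimpleModule.algebraMap_end_bijective_of_isAlgClosed K).2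
    (Module.End.smulLeft (M := M) z hz)
  refine ⟨c, ?_⟩
  rw [Algebra.smul_def]
  refine he.mul_eq_mul_of_forall_smul_eq fun m => ?_
  rw [algebraMap_smul]
  exact (LinearMap.congr_fun hc m).symm

theorem star_eq_self [Algebra ℂ A] [IsSimpleModule A M] {l : Module.Dual ℂ A} {st : A → A}
    (hinv : ∀ a, st (st a) = a) (hmul : ∀ a b, st (a * b) = st b * st a)
    (hclass : ∀ a b, l (a * b) = l (b * a)) (hpos : ∀ a : A, a ≠ 0 → 0 < (l (a * st a)).re)
    (he : IsBlockIdempotent e M) : st e = e := by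
  have hc : st e ∈ Set.center A := Semigroup.mem_center_iff.2 fun a => by
    rw [← hinv a, ← hmul, ← hmul, Semigroup.mem_center_iff.1 he.mem_center]
  have hidem : IsIdempotentElem (st e) := by
    rw [IsIdempotentElem, ← hmul, he.isIdempotentElem.eq]
  rcases forall_smul_eq_zero_or_forall_smul_eq_self (M := M) hidem hc with h_zero | h_id
  · have := IsSimpleModule.nontrivial A M
    have : l (e * st e) = 0 := by
      rw [hclass, he.mul_eq_zero_of_forall_smul_eq_zero _ h_zero, map_zero]
    simpa [this] using hpos e he.ne_zero
  · have h : st e * e = e := by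
      simpa using he.mul_eq_mul_of_forall_smul_eq (b := 1) (by simpa using h_id)
    -- applying `st` to `st e * e = e` gives `st e * e = st e`
    rw [← h, ← congrArg st h, hmul, hinv, h]

end IsBlockIdempotent

section Frobenius

variable {K A : Type*} [Field K] [Ring A] [Algebra K A]

/-- The map `φ : A → A*`. -/
def frobeniusMap (l : Module.Dual K A) : A →ₗ[K] Module.Dual K A :=
  (LinearMap.mul K A).flip.compr₂ l

@[simp]
theorem frobeniusMap_apply (l : Module.Dual K A) (a x : A) : frobeniusMap l a x = l (x * a) :=
  rfl

variable (K A) in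
def classFunctionals : Submodule K (Module.Dual K A) where
  carrier := {γ | ∀ a b, γ (a * b) = γ (b * a)}
  add_mem' hγ hδ a b := by simp only [LinearMap.add_apply, hγ a b, hδ a b]
  zero_mem' _ _ := rfl
  smul_mem' c γ hγ a b := by simp only [LinearMap.smul_apply, hγ a b]

variable {l : Module.Dual K A}

theorem frobeniusMap_surjective [FiniteDimensional K A]
    (hinj : Function.Injective (frobeniusMap l)) : Function.Surjective (frobeniusMap l) :=
  (LinearMap.injective_iff_surjective_of_finrank_eq_finrank Subspace.dual_finrank_eq.symm).1 hinj

theorem mem_center_of_frobeniusMap_mem_classFunctionals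
    (hinj : Function.Injective (frobeniusMap l)) (hclass : ∀ a b, l (a * b) = l (b * a)) {z : A}
    (hz : frobeniusMap l z ∈ classFunctionals K A) : z ∈ Set.center A := by
  refine Semigroup.mem_center_iff.2 fun a => sub_eq_zero.1 <| hinj <| LinearMap.ext fun x => ?_
  have hzx : l (x * (z * a)) = l (a * x * z) := by rw [← mul_assoc, hclass, ← mul_assoc]
  rw [map_sub, map_zero, LinearMap.sub_apply, frobeniusMap_apply, frobeniusMap_apply, hzx,
    ← mul_assoc, LinearMap.zero_apply]
  exact sub_eq_zero.2 (hz x a)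

end Frobenius

theorem frobeniusMap_injective {A : Type*} [Ring A] [Algebra ℂ A] {l : Module.Dual ℂ A}
    {st : A → A} (hclass : ∀ a b, l (a * b) = l (b * a))
    (hpos : ∀ a : A, a ≠ 0 → 0 < (l (a * st a)).re) : Function.Injective (frobeniusMap l) := by
  refine (injective_iff_map_eq_zero _).2 fun z hz => by_contra fun hz0 => ?_
  have : l (z * st z) = 0 := by rw [hclass, ← frobeniusMap_apply, hz, LinearMap.zero_apply]
  simpa [this] using hpos z hz0

section Character

variable {A M : Type*} [Ring A] [Algebra ℂ A] [AddCommGroup M] [Module A M] [Module ℂ M]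
  [SMulCommClass A ℂ M] [IsScalarTower ℂ A M]

theorem charMap_apply_s12 (a : A) :
    charMap A M a = LinearMap.trace ℂ M (Module.toModuleEnd ℂ M a) :=
  rfl

theorem charMap_mem_classFunctionals : charMap A M ∈ classFunctionals ℂ A := fun a b => by
  rw [charMap_apply_s12, charMap_apply_s12, map_mul (Module.toModuleEnd ℂ M),
    map_mul (Module.toModuleEnd ℂ M), LinearMap.trace_mul_comm]

theorem charMap_eq_zero_of_forall_smul_eq_zero {a : A} (h : ∀ m : M, a • m = 0) :
    charMap A M a = 0 := by
  rw [charMap_apply_s12, show Module.toModuleEnd ℂ M a = 0 from LinearMap.ext h, map_zero]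

theorem charMap_eq_finrank_of_forall_smul_eq_self [FiniteDimensional ℂ M] {a : A}
    (h : ∀ m : M, a • m = m) : charMap A M a = Module.finrank ℂ M := by
  rw [charMap_apply_s12, show Module.toModuleEnd ℂ M a = 1 from LinearMap.ext h, LinearMap.trace_one]

theorem charMap_one_ne_zero [FiniteDimensional ℂ M] [Nontrivial M] : charMap A M 1 ≠ 0 := by
  rw [charMap_eq_finrank_of_forall_smul_eq_self (one_smul A)]
  exact Nat.cast_ne_zero.2 Module.finrank_pos.ne'

variable {l : Module.Dual ℂ A} {α : A}

theorem mul_eq_zero_of_frobeniusMap_eq_charMap (hinj : Function.Injective (frobeniusMap l))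
    (hclass : ∀ a b, l (a * b) = l (b * a)) (hα : frobeniusMap l α = charMap A M) {b : A}
    (hb : ∀ m : M, b • m = 0) : α * b = 0 := by
  refine hinj (LinearMap.ext fun x => ?_)
  rw [frobeniusMap_apply, ← mul_assoc, hclass, ← mul_assoc, ← frobeniusMap_apply, hα, map_zero,
    LinearMap.zero_apply]
  exact charMap_eq_zero_of_forall_smul_eq_zero fun m => by rw [mul_smul, hb]

theorem IsBlockIdempotent.exists_eq_smul_of_frobeniusMap_eq_charMap [FiniteDimensional ℂ M]
    [IsSimpleModule A M] (hinj : Function.Injective (frobeniusMap l))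
    (hclass : ∀ a b, l (a * b) = l (b * a)) (hα : frobeniusMap l α = charMap A M) {e : A}
    (he : IsBlockIdempotent e M) : ∃ c : ℂ, c ≠ 0 ∧ α = c • e := by
  have hcenter : α ∈ Set.center A := mem_center_of_frobeniusMap_mem_classFunctionals hinj hclass
    (hα ▸ charMap_mem_classFunctionals)
  obtain ⟨c, hc⟩ := he.exists_mul_eq_smul (K := ℂ) hcenter
  have hαe : α = α * e := by
    rw [← sub_eq_zero, ← mul_one_sub]
    exact mul_eq_zero_of_frobeniusMap_eq_charMap hinj hclass hα fun m => by
      rw [sub_smul, one_smul, he.smul_eq_self, sub_self]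
  refine ⟨c, fun hc0 => ?_, hαe.trans hc⟩
  have := IsSimpleModule.nontrivial A M
  apply charMap_one_ne_zero (A := A) (M := M)
  rw [← hα, frobeniusMap_apply, hαe, hc, hc0, zero_smul, mul_zero, map_zero]

end Character

section CharacterFamily

variable {A : Type*} [Ring A] [Algebra ℂ A] {ι : Type*} [Fintype ι] {M : ι → Type*}
  [∀ i, AddCommGroup (M i)] [∀ i, Module A (M i)] [∀ i, Module ℂ (M i)]
  [∀ i, SMulCommClass A ℂ (M i)] [∀ i, IsScalarTower ℂ A (M i)]
  [∀ i, FiniteDimensional ℂ (M i)] [∀ i, IsSimpleModule A (M i)] {e : ι → A}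

theorem linearIndependent_charMap (he : ∀ i, IsBlockIdempotent (e i) (M i))
    (hzero : ∀ i j, i ≠ j → ∀ m : M j, e i • m = 0) :
    LinearIndependent ℂ fun i => charMap A (M i) := by
  classical
  refine Fintype.linearIndependent_iff.2 fun g hg k => ?_
  have := IsSimpleModule.nontrivial A (M k)
  have hχ (i : ι) (hik : i ≠ k) : charMap A (M i) (e k) = 0 :=
    charMap_eq_zero_of_forall_smul_eq_zero (hzero k i hik.symm)
  have hk := LinearMap.congr_fun hg (e k)
  rw [LinearMap.sum_apply, Finset.sum_eq_single k
      (fun i _ hik => by rw [LinearMap.smul_apply, hχ i hik, smul_zero]) (by simp),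
    LinearMap.smul_apply, charMap_eq_finrank_of_forall_smul_eq_self (he k).smul_eq_self,
    LinearMap.zero_apply, smul_eq_mul] at hk
  exact (mul_eq_zero.1 hk).resolve_right (Nat.cast_ne_zero.2 Module.finrank_pos.ne')

theorem span_charMap_eq_classFunctionals [FiniteDimensional ℂ A] {l : Module.Dual ℂ A}
    (hinj : Function.Injective (frobeniusMap l)) (hclass : ∀ a b, l (a * b) = l (b * a))
    {α : ι → A} (hα : ∀ i, frobeniusMap l (α i) = charMap A (M i))
    (he : ∀ i, IsBlockIdempotent (e i) (M i)) (hsum : ∑ i, e i = 1) :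
    Submodule.span ℂ (Set.range fun i => charMap A (M i)) = classFunctionals ℂ A := by
  refine le_antisymm (Submodule.span_le.2 (Set.range_subset_iff.2 fun i =>
    charMap_mem_classFunctionals)) fun γ hγ => ?_
  obtain ⟨z, rfl⟩ := frobeniusMap_surjective hinj γ
  have hz := mem_center_of_frobeniusMap_mem_classFunctionals hinj hclass hγ
  rw [← mul_one z, ← hsum, Finset.mul_sum, map_sum]
  refine Submodule.sum_mem _ fun i _ => ?_
  obtain ⟨c, hc⟩ := (he i).exists_mul_eq_smul (K := ℂ) hz
  obtain ⟨d, hd, hαi⟩ := (he i).exists_eq_smul_of_frobeniusMap_eq_charMap hinj hclass (hα i)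
  have hze : z * e i = (c / d) • α i := by rw [hc, hαi, smul_smul, div_mul_cancel₀ _ hd]
  rw [hze, map_smul, hα i]
  exact Submodule.smul_mem _ _ (Submodule.subset_span ⟨i, rfl⟩)

end CharacterFamily

theorem frobenius_star_character_orthogonal_basis_general
    {A : Type*} [Ring A] [Algebra ℂ A] [FiniteDimensional ℂ A]
    (l : A →ₗ[ℂ] ℂ) (st : A → A)
    (hinv : ∀ a : A, st (st a) = a)
    (hmul : ∀ a b : A, st (a * b) = st b * st a)
    (hsmul : ∀ (c : ℂ) (a : A), st (c • a) = (starRingEnd ℂ c) • st a)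
    (hclass : ∀ a b : A, l (a * b) = l (b * a))
    (hpos : ∀ a : A, a ≠ 0 → 0 < (l (a * st a)).re)
    {ι : Type} [Fintype ι]
    (M : ι → Type) [∀ i, AddCommGroup (M i)] [∀ i, Module A (M i)]
    [∀ i, Module ℂ (M i)] [∀ i, SMulCommClass A ℂ (M i)]
    [∀ i, IsScalarTower ℂ A (M i)] [∀ i, FiniteDimensional ℂ (M i)]
    [∀ i, IsSimpleModule A (M i)]
    (hpairwise : ∀ i j, i ≠ j → ¬ Nonempty (M i ≃ₗ[A] M j))
    (hcomplete : ∀ (N : Type) [AddCommGroup N] [Module A N],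
      IsSimpleModule A N → ∃ i, Nonempty (M i ≃ₗ[A] N))
    (α e : ι → A)
    (hα : ∀ i, ∀ x : A, l (x * α i) = charMap A (M i) x)
    (he_idem : ∀ i, e i * e i = e i)
    (he_central : ∀ i, ∀ a : A, e i * a = a * e i)
    (he_id : ∀ i, ∀ m : M i, e i • m = m)
    (he_ann : ∀ i, ∀ a : A, (∀ m : M i, a • m = 0) → a * e i = 0) :
    (∀ i j, i ≠ j → l (α i * st (α j)) = 0) ∧
    (∀ i, ∀ c : ℂ, α i = c • e i →
      l (α i * st (α i)) = (‖c‖ : ℂ) ^ 2 * l (e i * st (e i))) ∧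
    LinearIndependent ℂ (fun i => charMap A (M i)) ∧
    (Submodule.span ℂ (Set.range fun i => charMap A (M i)) : Set (Module.Dual ℂ A)) =
      {γ : Module.Dual ℂ A | ∀ a b : A, γ (a * b) = γ (b * a)} := by
  have := IsArtinianRing.of_finite ℂ A
  have : Small.{0} A := small_of_injective (Module.finBasis ℂ A).equivFun.injective
  have he (i : ι) : IsBlockIdempotent (e i) (M i) :=
    ⟨he_idem i, Semigroup.mem_center_iff.2 fun a => (he_central i a).symm, he_id i, he_ann i⟩
  have hzero (i j : ι) (hij : i ≠ j) : ∀ m : M j, e i • m = 0 :=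
    (he i).smul_eq_zero_of_not_nonempty_linearEquiv (he j) (hpairwise i j hij)
  have horth : OrthogonalIdempotents e := ⟨he_idem, fun i j hij =>
    (he i).mul_eq_zero_of_not_nonempty_linearEquiv (he j) (hpairwise i j hij)⟩
  have hinj := frobeniusMap_injective hclass hpos
  have hα' (i : ι) : frobeniusMap l (α i) = charMap A (M i) := LinearMap.ext (hα i)
  refine ⟨fun i j hij => ?_, fun i c hc => ?_, linearIndependent_charMap he hzero,
    congrArg _ (span_charMap_eq_classFunctionals hinj hclass hα' he
      (IsBlockIdempotent.sum_eq_one he horth hcomplete))⟩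
  · obtain ⟨ci, -, hci⟩ :=
      (he i).exists_eq_smul_of_frobeniusMap_eq_charMap hinj hclass (hα' i)
    obtain ⟨cj, -, hcj⟩ :=
      (he j).exists_eq_smul_of_frobeniusMap_eq_charMap hinj hclass (hα' j)
    rw [hci, hcj, hsmul, (he j).star_eq_self hinv hmul hclass hpos, smul_mul_smul_comm,
      horth.ortho hij, smul_zero, map_zero]
  · rw [hc, hsmul, smul_mul_smul_comm, map_smul, smul_eq_mul, Complex.mul_conj,
      Complex.normSq_eq_norm_sq, Complex.ofReal_pow]

/-- In a Frobenius ⋆-algebra `A`, the irreducible characters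
(taken over a complete set `M i` of pairwise non-isomorphic simple modules) form an
orthogonal basis of the space of class functionals; explicitly, with
`α i = φ⁻¹(χ_{M i})` one has `⟨α i, α j⟩ = 0` for `i ≠ j` and
`⟨α i, α i⟩ = |c|²·⟨e i, e i⟩` where `α i = c • e i` for the primitive central
idempotent `e i` corresponding to `M i`. -/
theorem frobenius_star_character_orthogonal_basis
    {A : Type*} [Ring A] [Algebra ℂ A] [FiniteDimensional ℂ A]
    (l : A →ₗ[ℂ] ℂ) (st : A → A)
    (hadd : ∀ a b : A, st (a + b) = st a + st b)
    (hinv : ∀ a : A, st (st a) = a)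
    (hmul : ∀ a b : A, st (a * b) = st b * st a)
    (hsmul : ∀ (c : ℂ) (a : A), st (c • a) = (starRingEnd ℂ c) • st a)
    (hclass : ∀ a b : A, l (a * b) = l (b * a))
    (hherm : ∀ a b : A, l (b * st a) = starRingEnd ℂ (l (a * st b)))
    (hpos : ∀ a : A, a ≠ 0 → 0 < (l (a * st a)).re)
    {ι : Type} [Fintype ι]
    (M : ι → Type) [∀ i, AddCommGroup (M i)] [∀ i, Module A (M i)]
    [∀ i, Module ℂ (M i)] [∀ i, SMulCommClass A ℂ (M i)]
    [∀ i, IsScalarTower ℂ A (M i)] [∀ i, FiniteDimensional ℂ (M i)]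
    [∀ i, IsSimpleModule A (M i)]
    (hpairwise : ∀ i j, i ≠ j → ¬ Nonempty (M i ≃ₗ[A] M j))
    (hcomplete : ∀ (N : Type) [AddCommGroup N] [Module A N],
      IsSimpleModule A N → ∃ i, Nonempty (M i ≃ₗ[A] N))
    (α e : ι → A)
    (hα : ∀ i, ∀ x : A, l (x * α i) = charMap A (M i) x)
    (he_idem : ∀ i, e i * e i = e i)
    (he_central : ∀ i, ∀ a : A, e i * a = a * e i)
    (he_id : ∀ i, ∀ m : M i, e i • m = m)
    (he_ann : ∀ i, ∀ a : A, (∀ m : M i, a • m = 0) → a * e i = 0) :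
    (∀ i j, i ≠ j → l (α i * st (α j)) = 0) ∧
    (∀ i, ∀ c : ℂ, α i = c • e i →
      l (α i * st (α i)) = (‖c‖ : ℂ) ^ 2 * l (e i * st (e i))) ∧
    LinearIndependent ℂ (fun i => charMap A (M i)) ∧
    (Submodule.span ℂ (Set.range fun i => charMap A (M i)) : Set (Module.Dual ℂ A)) =
      {γ : Module.Dual ℂ A | ∀ a b : A, γ (a * b) = γ (b * a)} :=
  frobenius_star_character_orthogonal_basis_general l st hinv hmul hsmul hclass hpos M hpairwise
    hcomplete α e hα he_idem he_central he_id he_ann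
end

section
/- Let A = ⊕_{r ∈ ℤ/mℤ} A_r be a ℤ/mℤ-graded Frobenius ⋆-algebra. If M = ⊕_r M_r ⊆ A is a ℤ/mℤ-graded left A-submodule of A with M_0 = 0, then M = 0. In other words, the null socle of the graded left A-module A is zero. -/
/-!
If `a ∈ I` is homogeneous of degree `r`, then `a⋆ a ∈ I` is homogeneous of degree `-r + r = 0`,
hence zero; positivity of `λ(b b⋆)` at `b = a⋆` forces `a = 0`. A homogeneous ideal without
nonzero homogeneous elements is `⊥`.
-/

theorem Ideal.IsHomogeneous.eq_bot_of_forall_homogeneous_eq_zero {ι σ A : Type*} [Semiring A]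
    [SetLike σ A] [AddSubmonoidClass σ A] {𝒜 : ι → σ} [DecidableEq ι] [AddMonoid ι]
    [GradedRing 𝒜] {I : Ideal A} (hI : I.IsHomogeneous 𝒜)
    (h : ∀ i, ∀ x ∈ 𝒜 i, x ∈ I → x = 0) : I = ⊥ :=
  eq_bot_iff.2 fun _ hx => (Ideal.IsHomogeneous.bot 𝒜).mem_iff.2 fun i =>
    Ideal.mem_bot.2 (h i _ (SetLike.coe_mem _) (hI i hx))

theorem eq_zero_of_star_mul_self_eq_zero {A : Type*} [Ring A] [Module ℂ A] (st : A → A)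
    (hadd : ∀ a b : A, st (a + b) = st a + st b) (hinv : ∀ a : A, st (st a) = a)
    (l : A →ₗ[ℂ] ℂ) (hpos : ∀ a : A, a ≠ 0 → 0 < (l (a * st a)).re) {a : A}
    (h : st a * a = 0) : a = 0 := by
  by_contra ha
  have hst : st a ≠ 0 := fun hst => ha <| by
    rw [← hinv a, hst]
    exact map_zero (AddMonoidHom.mk' st hadd)
  simpa [hinv, h] using hpos (st a) hst

theorem eq_zero_of_mem_ideal_of_mem_graded {ι σ A : Type*} [AddGroup ι] [Ring A]
    [SetLike σ A] (𝒜 : ι → σ) [SetLike.GradedMonoid 𝒜] (st : A → A)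
    (hstgr : ∀ r : ι, ∀ a ∈ 𝒜 r, st a ∈ 𝒜 (-r)) (hfaithful : ∀ a : A, st a * a = 0 → a = 0)
    {I : Ideal A} (h0 : ∀ x ∈ I, x ∈ 𝒜 0 → x = 0) {r : ι} {a : A} (har : a ∈ 𝒜 r)
    (haI : a ∈ I) : a = 0 := by
  have hdeg : st a * a ∈ 𝒜 0 := by
    simpa using SetLike.mul_mem_graded (hstgr r a har) har
  exact hfaithful a (h0 _ (I.mul_mem_left _ haI) hdeg)

theorem graded_frobenius_star_null_socle_of_A_general
    {A : Type*} [Ring A] [Algebra ℂ A]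
    {m : ℕ}
    (𝒜 : ZMod m → Submodule ℂ A) [GradedRing 𝒜]
    (st : A → A)
    (hadd : ∀ a b : A, st (a + b) = st a + st b)
    (hinv : ∀ a : A, st (st a) = a)
    (hstgr : ∀ r : ZMod m, ∀ a ∈ 𝒜 r, st a ∈ 𝒜 (-r))
    (l : A →ₗ[ℂ] ℂ)
    (hpos : ∀ a : A, a ≠ 0 → 0 < (l (a * st a)).re)
    (I : Ideal A)
    (hgraded : ∀ x ∈ I, ∀ r : ZMod m, (DirectSum.decompose 𝒜 x r : A) ∈ I)
    (h0 : ∀ x ∈ I, x ∈ 𝒜 0 → x = 0) :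
    I = ⊥ := by
  have hfaithful : ∀ a : A, st a * a = 0 → a = 0 := fun _ =>
    eq_zero_of_star_mul_self_eq_zero st hadd hinv l hpos
  exact Ideal.IsHomogeneous.eq_bot_of_forall_homogeneous_eq_zero (fun r _ hx => hgraded _ hx r)
    fun _ _ har haI => eq_zero_of_mem_ideal_of_mem_graded 𝒜 st hstgr hfaithful h0 har haI

/-- Let `A = ⊕_{r ∈ ℤ/mℤ} A_r` be a `ℤ/mℤ`-graded Frobenius ⋆-algebra.
Any graded left `A`-submodule `I ⊆ A` (a homogeneous left ideal) with `I ∩ A₀ = 0`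
is zero: the null socle of the graded left `A`-module `A` vanishes. -/
theorem graded_frobenius_star_null_socle_of_A
    {A : Type*} [Ring A] [Algebra ℂ A] [FiniteDimensional ℂ A]
    {m : ℕ} [NeZero m]
    (𝒜 : ZMod m → Submodule ℂ A) [GradedRing 𝒜]
    (st : A → A)
    (hadd : ∀ a b : A, st (a + b) = st a + st b)
    (hinv : ∀ a : A, st (st a) = a)
    (hmul : ∀ a b : A, st (a * b) = st b * st a)
    (hsmul : ∀ (c : ℂ) (a : A), st (c • a) = (starRingEnd ℂ c) • st a)
    (hstgr : ∀ r : ZMod m, ∀ a ∈ 𝒜 r, st a ∈ 𝒜 (-r))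
    (l : A →ₗ[ℂ] ℂ)
    (hl0 : ∀ r : ZMod m, r ≠ 0 → ∀ a ∈ 𝒜 r, l a = 0)
    (hclass0 : ∀ a ∈ 𝒜 0, ∀ b ∈ 𝒜 0, l (a * b) = l (b * a))
    (hherm : ∀ a b : A, l (b * st a) = starRingEnd ℂ (l (a * st b)))
    (hpos : ∀ a : A, a ≠ 0 → 0 < (l (a * st a)).re)
    (I : Ideal A)
    (hgraded : ∀ x ∈ I, ∀ r : ZMod m, (DirectSum.decompose 𝒜 x r : A) ∈ I)
    (h0 : ∀ x ∈ I, x ∈ 𝒜 0 → x = 0) :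
    I = ⊥ :=
  graded_frobenius_star_null_socle_of_A_general 𝒜 st hadd hinv hstgr l hpos I hgraded h0
end

section
/- Let A = ⊕_{r ∈ ℤ/mℤ} A_r be a ℤ/mℤ-graded Frobenius ⋆-algebra and M any left A₀-module. Then the null socle of the ℤ/mℤ-graded A-module A ⊗_{A₀} M is zero; i.e., every graded A-submodule U of A ⊗_{A₀} M with U₀ = 0 is the zero submodule. -/
/-!
Write `U_r` for the degree-`r` part of `U`. Since `A_{-r} U_r ⊆ U_0 = 0`, it is enough to find
`e ∈ A_r A_{-r}` acting as the identity on `A_r`: then `e` fixes `(A ⊗_{A₀} M)_r`, which is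
spanned by the `a ⊗ m` with `a ∈ A_r`, while `e U_r = 0`; hence `U_r = 0`.

To find `e`, let `a_1, …, a_n` span `A_r` and put `t = ∑ a_k a_k⋆ ∈ A_r A_{-r}`. If `t a = 0`
then `λ(a⋆ t a) = ∑ λ(x_k x_k⋆) = 0` with `x_k = a⋆ a_k`, so positivity forces `a⋆ A_r = 0`,
hence `a⋆ a = 0` and `a = 0`: left multiplication by `t` is injective on `A_r`. On the
finite-dimensional space of operators `v ↦ z v` on `A_r` (`z ∈ A_r A_{-r}`), composition with
`t` is then injective, hence surjective, which yields `z` with `t z v = t v`, i.e. `z v = v`.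
-/

open scoped TensorProduct

/-- The relation submodule defining `A ⊗_{A₀} M` as a quotient of `A ⊗[ℂ] M`:
the `A`-span of the elements `(a·b) ⊗ m − a ⊗ (b•m)` for `b ∈ A₀`. -/
noncomputable def relSub {A : Type*} [Ring A] [Algebra ℂ A]
    {m : ℕ} (𝒜 : ZMod m → Submodule ℂ A) [GradedRing 𝒜]
    (M : Type*) [AddCommGroup M] [Module ℂ M] [Module (𝒜 0) M] :
    Submodule A (A ⊗[ℂ] M) :=
  Submodule.span A
    {x | ∃ (a : A) (b : 𝒜 0) (mm : M), x = (a * (b : A)) ⊗ₜ[ℂ] mm - a ⊗ₜ[ℂ] (b • mm)}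

/-- The induced module `A ⊗_{A₀} M`, realised as `(A ⊗[ℂ] M) / relSub`. -/
noncomputable abbrev IndMod {A : Type*} [Ring A] [Algebra ℂ A]
    {m : ℕ} (𝒜 : ZMod m → Submodule ℂ A) [GradedRing 𝒜]
    (M : Type*) [AddCommGroup M] [Module ℂ M] [Module (𝒜 0) M] :=
  (A ⊗[ℂ] M) ⧸ relSub 𝒜 M

/-- The `r`-th graded piece of `A ⊗_{A₀} M`: the `ℂ`-span of the classes of the
pure tensors `a ⊗ m` with `a ∈ A_r`. -/
noncomputable def gradePiece {A : Type*} [Ring A] [Algebra ℂ A]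
    {m : ℕ} (𝒜 : ZMod m → Submodule ℂ A) [GradedRing 𝒜]
    (M : Type*) [AddCommGroup M] [Module ℂ M] [Module (𝒜 0) M]
    (r : ZMod m) : Submodule ℂ (IndMod 𝒜 M) :=
  Submodule.span ℂ
    {x | ∃ a ∈ 𝒜 r, ∃ mm : M, x = (relSub 𝒜 M).mkQ ((a : A) ⊗ₜ[ℂ] mm)}
theorem Submodule.exists_mul_eq_self_of_injective {K B : Type*} [Field K] [Ring B]
    [Algebra K B] [FiniteDimensional K B] {V J : Submodule K B} (hJV : J * V ≤ V)
    (hJJ : J * J ≤ J) {t : B} (ht : t ∈ J) (hinj : ∀ v ∈ V, t * v = 0 → v = 0) :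
    ∃ e ∈ J, ∀ v ∈ V, e * v = v := by
  let Φ : B →ₗ[K] V →ₗ[K] B := (LinearMap.mul K B).compl₂ V.subtype
  let L : (V →ₗ[K] B) →ₗ[K] V →ₗ[K] B := LinearMap.llcomp K V B B (LinearMap.mulLeft K t)
  have hΦ : ∀ z (v : V), Φ z v = z * v := fun _ _ => rfl
  have hLΦ : ∀ z, L (Φ z) = Φ (t * z) := fun z => LinearMap.ext fun v => (mul_assoc _ _ _).symm
  let E : Submodule K (V →ₗ[K] B) := J.map Φ
  have hLE : ∀ f ∈ E, L f ∈ E := by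
    rintro _ ⟨z, hz, rfl⟩
    exact ⟨t * z, hJJ (mul_mem_mul ht hz), (hLΦ z).symm⟩
  let LE : E →ₗ[K] E := L.restrict hLE
  have hinjL : Function.Injective LE := by
    rw [injective_iff_map_eq_zero]
    rintro ⟨_, z, hz, rfl⟩ hzero
    ext v
    have htz : Φ (t * z) = 0 := (hLΦ z).symm.trans (congrArg Subtype.val hzero)
    have htzv := LinearMap.congr_fun htz v
    rw [hΦ, LinearMap.zero_apply, mul_assoc] at htzv
    exact hinj _ (hJV (mul_mem_mul hz v.2)) htzv
  obtain ⟨⟨_, z, hz, rfl⟩, hzt⟩ :=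
    LinearMap.injective_iff_surjective.1 hinjL (⟨Φ t, t, ht, rfl⟩ : E)
  refine ⟨z, hz, fun v hv => sub_eq_zero.1 (hinj _ (sub_mem (hJV (mul_mem_mul hz hv)) hv) ?_)⟩
  have htz : Φ (t * z) = Φ t := (hLΦ z).symm.trans (congrArg Subtype.val hzt)
  have htzv := LinearMap.congr_fun htz ⟨v, hv⟩
  rw [hΦ, hΦ] at htzv
  rw [mul_sub, ← mul_assoc, htzv, sub_self]

section Grading

variable {ι R A : Type*} [AddMonoid ι] [CommSemiring R] [Semiring A] [Algebra R A]
  {𝒜 : ι → Submodule R A} [SetLike.GradedMonoid 𝒜]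

theorem grade_mul_grade_le {i j k : ι} (h : i + j = k) : 𝒜 i * 𝒜 j ≤ 𝒜 k :=
  Submodule.mul_le.2 fun _ ha _ hb => h ▸ SetLike.mul_mem_graded ha hb

end Grading

section PositiveStar

variable {A : Type*} [Ring A] [Algebra ℂ A] {st : A → A} {l : A →ₗ[ℂ] ℂ}

theorem eq_zero_of_mul_st_eq_zero (hpos : ∀ a : A, a ≠ 0 → 0 < (l (a * st a)).re) {a : A}
    (h : a * st a = 0) : a = 0 := by
  by_contra ha
  simpa [h] using hpos a ha

theorem forall_eq_zero_of_sum_mul_st_eq_zero (hpos : ∀ a : A, a ≠ 0 → 0 < (l (a * st a)).re)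
    {κ : Type*} {s : Finset κ} {x : κ → A} (h : ∑ k ∈ s, l (x k * st (x k)) = 0) :
    ∀ k ∈ s, x k = 0 := by
  have hnonneg : ∀ k ∈ s, 0 ≤ (l (x k * st (x k))).re := fun k _ => by
    by_cases hk : x k = 0
    · simp [hk]
    · exact (hpos _ hk).le
  have hre := (Finset.sum_eq_zero_iff_of_nonneg hnonneg).1 (by simpa using congrArg Complex.re h)
  intro k hk
  by_contra hne
  exact (hpos _ hne).ne' (hre k hk)

theorem eq_zero_of_sum_mul_st_mul_eq_zero (hadd : ∀ a b : A, st (a + b) = st a + st b)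
    (hinv : ∀ a : A, st (st a) = a) (hmul : ∀ a b : A, st (a * b) = st b * st a)
    (hpos : ∀ a : A, a ≠ 0 → 0 < (l (a * st a)).re) {s : Finset A} {a : A}
    (ha : a ∈ Submodule.span ℂ (s : Set A)) (h : (∑ x ∈ s, x * st x) * a = 0) : a = 0 := by
  have hsum : ∑ x ∈ s, l ((st a * x) * st (st a * x)) = 0 :=
    calc ∑ x ∈ s, l ((st a * x) * st (st a * x))
        = l (st a * ((∑ x ∈ s, x * st x) * a)) := by
          simp only [hmul, hinv, Finset.sum_mul, Finset.mul_sum, map_sum, mul_assoc]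
      _ = 0 := by rw [h, mul_zero, map_zero]
  have hs : Submodule.span ℂ (s : Set A) ≤ LinearMap.ker (LinearMap.mulLeft ℂ (st a)) :=
    Submodule.span_le.2 fun x hx => forall_eq_zero_of_sum_mul_st_eq_zero hpos hsum x hx
  have hst : st a = 0 := eq_zero_of_mul_st_eq_zero hpos (by rw [hinv]; exact hs ha)
  have hst0 : st 0 = 0 := by simpa using hadd 0 0
  rw [← hinv a, hst, hst0]

end PositiveStar

section GradedUnit

variable {ι A : Type*} [AddGroup ι] [Ring A] [Algebra ℂ A] [FiniteDimensional ℂ A]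
  {𝒜 : ι → Submodule ℂ A} [SetLike.GradedMonoid 𝒜] {st : A → A} {l : A →ₗ[ℂ] ℂ}

theorem exists_mem_grade_mul_grade_neg_mul_eq_self (hadd : ∀ a b : A, st (a + b) = st a + st b)
    (hinv : ∀ a : A, st (st a) = a) (hmul : ∀ a b : A, st (a * b) = st b * st a)
    (hpos : ∀ a : A, a ≠ 0 → 0 < (l (a * st a)).re) {r : ι} (hst : ∀ a ∈ 𝒜 r, st a ∈ 𝒜 (-r)) :
    ∃ e ∈ 𝒜 r * 𝒜 (-r), ∀ a ∈ 𝒜 r, e * a = a := by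
  obtain ⟨s, hs⟩ := IsNoetherian.noetherian (𝒜 r)
  have hJV : 𝒜 r * 𝒜 (-r) * 𝒜 r ≤ 𝒜 r :=
    (mul_le_mul' (grade_mul_grade_le (add_neg_cancel r)) le_rfl).trans
      (grade_mul_grade_le (zero_add r))
  have hJJ : 𝒜 r * 𝒜 (-r) * (𝒜 r * 𝒜 (-r)) ≤ 𝒜 r * 𝒜 (-r) := by
    rw [← mul_assoc]
    exact mul_le_mul' hJV le_rfl
  refine Submodule.exists_mul_eq_self_of_injective hJV hJJ (t := ∑ x ∈ s, x * st x)
    (Submodule.sum_mem _ fun x hx => ?_) fun a ha => ?_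
  · have hx : x ∈ 𝒜 r := hs ▸ Submodule.subset_span hx
    exact Submodule.mul_mem_mul hx (hst x hx)
  · exact eq_zero_of_sum_mul_st_mul_eq_zero hadd hinv hmul hpos (hs ▸ ha)

end GradedUnit

section InducedModule

variable {A : Type*} [Ring A] [Algebra ℂ A] {m : ℕ} {𝒜 : ZMod m → Submodule ℂ A}
  [GradedRing 𝒜] {M : Type*} [AddCommGroup M] [Module ℂ M] [Module (𝒜 0) M]

theorem smul_mkQ_tmul (b a : A) (x : M) :
    b • (relSub 𝒜 M).mkQ (a ⊗ₜ[ℂ] x) = (relSub 𝒜 M).mkQ ((b * a) ⊗ₜ[ℂ] x) := by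
  rw [Submodule.mkQ_apply, Submodule.mkQ_apply, ← Submodule.Quotient.mk_smul,
    TensorProduct.smul_tmul', smul_eq_mul]

theorem smul_mem_gradePiece {i j : ZMod m} {b : A} (hb : b ∈ 𝒜 i) {x : IndMod 𝒜 M}
    (hx : x ∈ gradePiece 𝒜 M j) : b • x ∈ gradePiece 𝒜 M (i + j) := by
  induction hx using Submodule.span_induction with
  | mem x hx =>
    obtain ⟨a, ha, y, rfl⟩ := hx
    rw [smul_mkQ_tmul]
    exact Submodule.subset_span ⟨b * a, SetLike.mul_mem_graded hb ha, y, rfl⟩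
  | zero => rw [smul_zero]; exact zero_mem _
  | add x y _ _ hx hy => rw [smul_add]; exact add_mem hx hy
  | smul c x _ hx => rw [smul_comm]; exact Submodule.smul_mem _ c hx

theorem smul_eq_self_of_mem_gradePiece {r : ZMod m} {e : A} (he : ∀ a ∈ 𝒜 r, e * a = a)
    {x : IndMod 𝒜 M} (hx : x ∈ gradePiece 𝒜 M r) : e • x = x := by
  induction hx using Submodule.span_induction with
  | mem x hx =>
    obtain ⟨a, ha, y, rfl⟩ := hx
    rw [smul_mkQ_tmul, he a ha]
  | zero => rw [smul_zero]
  | add x y _ _ hx hy => rw [smul_add, hx, hy]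
  | smul c x _ hx => rw [smul_comm, hx]

theorem restrictScalars_inf_gradePiece_eq_bot (U : Submodule A (IndMod 𝒜 M))
    (hU0 : U.restrictScalars ℂ ⊓ gradePiece 𝒜 M 0 = ⊥) {r : ZMod m}
    (hunit : ∃ e ∈ 𝒜 r * 𝒜 (-r), ∀ a ∈ 𝒜 r, e * a = a) :
    U.restrictScalars ℂ ⊓ gradePiece 𝒜 M r = ⊥ := by
  obtain ⟨e, he, hea⟩ := hunit
  refine eq_bot_iff.2 fun x hx => ?_
  obtain ⟨hxU, hxr⟩ := Submodule.mem_inf.1 hx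
  have hkill : ∀ b ∈ 𝒜 (-r), b • x = 0 := fun b hb => by
    have hbx : b • x ∈ U.restrictScalars ℂ ⊓ gradePiece 𝒜 M 0 :=
      ⟨U.smul_mem b hxU, neg_add_cancel r ▸ smul_mem_gradePiece hb hxr⟩
    rwa [hU0] at hbx
  have hex : e • x = 0 := Submodule.mul_induction_on he
    (fun c _ b hb => by rw [mul_smul, hkill b hb, smul_zero])
    (fun y z hy hz => by rw [add_smul, hy, hz, add_zero])
  rw [Submodule.mem_bot, ← smul_eq_self_of_mem_gradePiece hea hxr, hex]

end InducedModule

theorem graded_frobenius_star_null_socle_of_induced_general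
    {A : Type*} [Ring A] [Algebra ℂ A] [FiniteDimensional ℂ A]
    {m : ℕ}
    (𝒜 : ZMod m → Submodule ℂ A) [GradedRing 𝒜]
    (st : A → A)
    (hadd : ∀ a b : A, st (a + b) = st a + st b)
    (hinv : ∀ a : A, st (st a) = a)
    (hmul : ∀ a b : A, st (a * b) = st b * st a)
    (hstgr : ∀ r : ZMod m, ∀ a ∈ 𝒜 r, st a ∈ 𝒜 (-r))
    (l : A →ₗ[ℂ] ℂ)
    (hpos : ∀ a : A, a ≠ 0 → 0 < (l (a * st a)).re)
    (M : Type*) [AddCommGroup M] [Module ℂ M] [Module (𝒜 0) M]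
    (U : Submodule A (IndMod 𝒜 M))
    (hUgraded : U.restrictScalars ℂ =
      ⨆ r : ZMod m, (U.restrictScalars ℂ ⊓ gradePiece 𝒜 M r))
    (hU0 : U.restrictScalars ℂ ⊓ gradePiece 𝒜 M 0 = ⊥) :
    U = ⊥ := by
  have hUr : ∀ r, U.restrictScalars ℂ ⊓ gradePiece 𝒜 M r = ⊥ := fun r =>
    restrictScalars_inf_gradePiece_eq_bot U hU0
      (exists_mem_grade_mul_grade_neg_mul_eq_self hadd hinv hmul hpos (hstgr r))
  rw [← Submodule.restrictScalars_eq_bot_iff ℂ, hUgraded]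
  simp only [hUr, iSup_bot]

/-- Let `A` be a `ℤ/mℤ`-graded Frobenius ⋆-algebra and `M` any left
`A₀`-module.  Then the null socle of the graded `A`-module `A ⊗_{A₀} M` is zero: any
graded `A`-submodule `U` of `A ⊗_{A₀} M` with `U₀ = 0` is the zero submodule. -/
theorem graded_frobenius_star_null_socle_of_induced
    {A : Type*} [Ring A] [Algebra ℂ A] [FiniteDimensional ℂ A]
    {m : ℕ} [NeZero m]
    (𝒜 : ZMod m → Submodule ℂ A) [GradedRing 𝒜]
    (st : A → A)
    (hadd : ∀ a b : A, st (a + b) = st a + st b)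
    (hinv : ∀ a : A, st (st a) = a)
    (hmul : ∀ a b : A, st (a * b) = st b * st a)
    (hsmul : ∀ (c : ℂ) (a : A), st (c • a) = (starRingEnd ℂ c) • st a)
    (hstgr : ∀ r : ZMod m, ∀ a ∈ 𝒜 r, st a ∈ 𝒜 (-r))
    (l : A →ₗ[ℂ] ℂ)
    (hl0 : ∀ r : ZMod m, r ≠ 0 → ∀ a ∈ 𝒜 r, l a = 0)
    (hclass0 : ∀ a ∈ 𝒜 0, ∀ b ∈ 𝒜 0, l (a * b) = l (b * a))
    (hherm : ∀ a b : A, l (b * st a) = starRingEnd ℂ (l (a * st b)))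
    (hpos : ∀ a : A, a ≠ 0 → 0 < (l (a * st a)).re)
    (M : Type*) [AddCommGroup M] [Module ℂ M] [Module (𝒜 0) M]
    [IsScalarTower ℂ (𝒜 0) M]
    (U : Submodule A (IndMod 𝒜 M))
    (hUgraded : U.restrictScalars ℂ =
      ⨆ r : ZMod m, (U.restrictScalars ℂ ⊓ gradePiece 𝒜 M r))
    (hU0 : U.restrictScalars ℂ ⊓ gradePiece 𝒜 M 0 = ⊥) :
    U = ⊥ :=
  graded_frobenius_star_null_socle_of_induced_general 𝒜 st hadd hinv hmul hstgr l hpos M U hUgraded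
    hU0
end

section
/- Let A be a semisimple finite-dimensional ℂ-algebra and B ⊆ A a semisimple subalgebra. Then the centralizer Z_B(A) = {a ∈ A : ab = ba for all b ∈ B} is isomorphic as an algebra to ⊕_{(U,V)} End(Hom_B(U, V)), where the sum runs over pairs (U, V) with U a simple B-module, V a simple A-module, and Hom_B(U, V) ≠ 0. In particular, Z_B(A) is semisimple and its simple modules are exactly the nonzero multiplicity spaces Hom_B(U, V). -/
/-!
Send `c` in the centralizer to post-composition with `c` on every multiplicity space
`Hom_B(U, V)`. This is injective because each `V` is the sum of the images of maps `U → V` and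
the simple `A`-modules form a faithful family. Surjectivity is Jacobson density used twice: the
nonzero `Hom_B(U, V)`, for fixed `V`, are simple `End_B(V)`-modules with no nonzero maps between
them, so prescribed endomorphisms of all of them are induced by one `T_V ∈ End_B(V)`; likewise
some `a ∈ A` acts as `T_V` on every `V`, and faithfulness puts `a` in the centralizer.
-/

open Module

universe v

theorem IsSimpleModule.eq_zero_of_not_nonempty_linearEquiv {R M N : Type*} [Ring R]
    [AddCommGroup M] [Module R M] [AddCommGroup N] [Module R N] [IsSimpleModule R M]
    [IsSimpleModule R N] (h : ¬ Nonempty (M ≃ₗ[R] N)) (f : M →ₗ[R] N) : f = 0 :=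
  by_contra fun hf => h ⟨.ofBijective f (LinearMap.bijective_of_ne_zero hf)⟩

theorem IsSemisimpleRing.eq_zero_of_forall_smul_eq_zero {A : Type*} [Ring A] [IsSemisimpleRing A]
    [Small.{v} A] {ι : Type*} (V : ι → Type v) [∀ i, AddCommGroup (V i)] [∀ i, Module A (V i)]
    (hV : ∀ (W : Type v) [AddCommGroup W] [Module A W],
      IsSimpleModule A W → ∃ i, Nonempty (V i ≃ₗ[A] W))
    (a : A) (ha : ∀ i (v : V i), a • v = 0) : a = 0 := by
  have h_simple (S : Submodule A A) (hS : IsSimpleModule A S) (x : A) (hx : x ∈ S) :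
      a * x = 0 := by
    obtain ⟨i, ⟨e⟩⟩ := hV (Shrink S) (.congr (Shrink.linearEquiv A S))
    let e' := e.trans (Shrink.linearEquiv A S)
    have h : a • (⟨x, hx⟩ : S) = 0 := by
      rw [← e'.apply_symm_apply ⟨x, hx⟩, ← map_smul, ha, map_zero]
    simpa using congrArg Subtype.val h
  have h_one : (1 : A) ∈ sSup {S : Submodule A A | IsSimpleModule A S} := by
    rw [IsSemisimpleModule.sSup_simples_eq_top]; trivial
  rw [sSup_eq_iSup'] at h_one
  simpa using Submodule.iSup_induction _ (motive := fun x => a * x = 0) h_one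
    (fun S => h_simple S.1 S.2) (mul_zero a) fun x y hx hy => by rw [mul_add, hx, hy, add_zero]

theorem IsSemisimpleModule.eq_zero_of_forall_comp_eq_zero {B : Type*} [Ring B] {ι : Type*}
    (U : ι → Type v) [∀ i, AddCommGroup (U i)] [∀ i, Module B (U i)]
    (hU : ∀ (W : Type v) [AddCommGroup W] [Module B W],
      IsSimpleModule B W → ∃ i, Nonempty (U i ≃ₗ[B] W))
    {V : Type v} [AddCommGroup V] [Module B V] [IsSemisimpleModule B V] {T : End B V}
    (hT : ∀ i (f : U i →ₗ[B] V), T ∘ₗ f = 0) : T = 0 := by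
  refine LinearMap.ker_eq_top.mp (eq_top_iff.mpr ?_)
  rw [← IsSemisimpleModule.sSup_simples_eq_top B V]
  refine sSup_le fun S (hS : IsSimpleModule B S) x hx => ?_
  obtain ⟨i, ⟨e⟩⟩ := hU S hS
  simpa using congr($(hT i (S.subtype ∘ₗ e.toLinearMap)) (e.symm ⟨x, hx⟩))

section Density

variable {k A ι : Type*} [Field k] [IsAlgClosed k] [Ring A] [Algebra k A] [Finite ι]
  {V : ι → Type*} [∀ i, AddCommGroup (V i)] [∀ i, Module k (V i)] [∀ i, Module A (V i)]
  [∀ i, IsScalarTower k A (V i)] [∀ i, IsSimpleModule A (V i)] [∀ i, FiniteDimensional k (V i)]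

theorem LinearMap.exists_pi_apply_eq_smul (hV : Pairwise fun i j => ∀ f : V i →ₗ[A] V j, f = 0)
    (ψ : (Π i, V i) →ₗ[A] Π i, V i) : ∃ c : ι → k, ∀ m i, ψ m i = c i • m i := by
  classical
  have := Fintype.ofFinite ι
  have h_diag (i : ι) :
      ∃ c : k, ∀ v, (LinearMap.proj i ∘ₗ ψ ∘ₗ LinearMap.single A V i) v = c • v := by
    obtain ⟨c, hc⟩ := (IsSimpleModule.algebraMap_end_bijective_of_isAlgClosed k (A := A)).2
      (LinearMap.proj i ∘ₗ ψ ∘ₗ LinearMap.single A V i)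
    exact ⟨c, fun v => by rw [← hc]; rfl⟩
  choose c hc using h_diag
  refine ⟨c, fun m i => ?_⟩
  have hm : ψ m i = ∑ l, (LinearMap.proj i ∘ₗ ψ ∘ₗ LinearMap.single A V l) (m l) := by
    conv_lhs => rw [← Finset.univ_sum_single m]
    simp
  rw [hm, Finset.sum_eq_single i (fun l _ hl => by
    rw [hV hl (LinearMap.proj i ∘ₗ ψ ∘ₗ LinearMap.single A V l)]; rfl) (by simp), hc]

theorem IsSimpleModule.exists_smul_eq_pi (hV : Pairwise fun i j => ∀ f : V i →ₗ[A] V j, f = 0)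
    (T : Π i, End k (V i)) : ∃ a : A, ∀ i v, a • v = T i v := by
  classical
  let F : End (End A (Π i, V i)) (Π i, V i) :=
    { toFun m i := T i (m i)
      map_add' m m' := by ext i; simp
      map_smul' ψ m := by
        obtain ⟨c, hc⟩ := LinearMap.exists_pi_apply_eq_smul (k := k) hV ψ
        ext i
        simp [End.smul_def, hc] }
  have : Module.Finite (End A (Π i, V i)) (Π i, V i) := .of_restrictScalars_finite k _ _
  obtain ⟨a, ha⟩ := Module.Finite.toModuleEnd_moduleEnd_surjective F
  refine ⟨a, fun i v => ?_⟩
  simpa [F] using congr($ha (Pi.single i v) i)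

end Density

section HomModule

variable {B U U' V : Type*} [Ring B] [AddCommGroup U] [Module B U] [AddCommGroup U'] [Module B U']
  [AddCommGroup V] [Module B V]

theorem LinearMap.finiteDimensional_of_isSimpleModule {k : Type*} [Field k] [Module k V]
    [SMulCommClass B k V] [FiniteDimensional k V] [IsSimpleModule B U] :
    FiniteDimensional k (U →ₗ[B] V) := by
  have := IsSimpleModule.nontrivial B U
  obtain ⟨u, hu⟩ := exists_ne (0 : U)
  refine .of_injective (LinearMap.applyₗ' k u) fun f g hfg => LinearMap.ext fun x => ?_
  obtain ⟨b, rfl⟩ := IsSimpleModule.toSpanSingleton_surjective B hu x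
  simpa using congr(b • $hfg)

variable [IsSemisimpleModule B V] [IsSimpleModule B U]

theorem LinearMap.isSimpleModule_end [Nontrivial (U →ₗ[B] V)] :
    IsSimpleModule (End B V) (U →ₗ[B] V) := by
  refine isSimpleModule_iff_toSpanSingleton_surjective.mpr ⟨‹_›, fun f hf g => ?_⟩
  exact IsSemisimpleModule.extension_property f
    ((LinearMap.injective_or_eq_zero f).resolve_right hf) g

theorem LinearMap.end_hom_eq_zero (hU : ∀ g : U' →ₗ[B] U, g = 0)
    (φ : (U →ₗ[B] V) →ₗ[End B V] (U' →ₗ[B] V)) : φ = 0 := by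
  ext f : 1
  rcases eq_or_ne f 0 with rfl | hf
  · exact map_zero φ
  -- `f ∘ₗ r` is an idempotent of `End B V` fixing `f`, with image `range f ≃ U`
  obtain ⟨r, hr⟩ := IsSemisimpleModule.extension_property f
    ((LinearMap.injective_or_eq_zero f).resolve_right hf) LinearMap.id
  have hf : (f ∘ₗ r) • f = f := by
    change f ∘ₗ r ∘ₗ f = f
    rw [hr, LinearMap.comp_id]
  calc φ f = (f ∘ₗ r) • φ f := by rw [← map_smul, hf]
    _ = f ∘ₗ (r ∘ₗ φ f) := rfl
    _ = 0 := by rw [hU (r ∘ₗ φ f), LinearMap.comp_zero]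

end HomModule

theorem IsSemisimpleModule.exists_smul_eq_pi_linearMap {k B ι : Type*} [Field k] [IsAlgClosed k]
    [Ring B] [Algebra k B] [Finite ι] (U : ι → Type*) [∀ i, AddCommGroup (U i)]
    [∀ i, Module B (U i)] [∀ i, IsSimpleModule B (U i)]
    (hU : Pairwise fun i j => ∀ f : U i →ₗ[B] U j, f = 0)
    {V : Type*} [AddCommGroup V] [Module k V] [Module B V] [IsScalarTower k B V]
    [SMulCommClass B k V] [IsSemisimpleModule B V] [FiniteDimensional k V]
    [∀ i, Nontrivial (U i →ₗ[B] V)] (g : Π i, End k (U i →ₗ[B] V)) :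
    ∃ T : End B V, ∀ i f, T • f = g i f :=
  have (i : ι) :=
    LinearMap.finiteDimensional_of_isSimpleModule (k := k) (B := B) (U := U i) (V := V)
  have (i : ι) := LinearMap.isSimpleModule_end (B := B) (U := U i) (V := V)
  IsSimpleModule.exists_smul_eq_pi (k := k)
    (fun _ _ hij => LinearMap.end_hom_eq_zero (hU hij.symm)) g

namespace Subalgebra

variable {k A : Type*} [Field k] [Ring A] [Algebra k A] (B : Subalgebra k A)

instance smulCommClass_centralizer (V : Type*) [AddCommGroup V] [Module A V] :
    SMulCommClass (centralizer k (B : Set A)) B V where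
  smul_comm c b v := by
    change (c : A) • (b : A) • v = (b : A) • (c : A) • v
    rw [← mul_smul, ← mul_smul, (mem_centralizer_iff k).mp c.2 b b.2]

instance smulCommClass_centralizer' (V : Type*) [AddCommGroup V] [Module A V] :
    SMulCommClass B (centralizer k (B : Set A)) V :=
  .symm ..

variable {ιU ιV : Type*} (U : ιU → Type v) [∀ i, AddCommGroup (U i)] [∀ i, Module B (U i)]
  (V : ιV → Type v) [∀ j, AddCommGroup (V j)] [∀ j, Module k (V j)] [∀ j, Module A (V j)]
  [∀ j, IsScalarTower k A (V j)] [∀ j, SMulCommClass B k (V j)]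

/-- `c` acts on each multiplicity space `Hom_B(U i, V j)` by post-composition. -/
def centralizerToPiEnd : centralizer k (B : Set A) →ₐ[k]
    Π p : {p : ιU × ιV // ∃ f : U p.1 →ₗ[B] V p.2, f ≠ 0}, End k (U p.1.1 →ₗ[B] V p.1.2) :=
  AlgHom.pi fun _ => Algebra.lsmul k k _

variable {B U V}

theorem centralizerToPiEnd_injective [IsSemisimpleRing B]
    (hU : ∀ (W : Type v) [AddCommGroup W] [Module B W],
      IsSimpleModule B W → ∃ i, Nonempty (U i ≃ₗ[B] W))
    (hV_faithful : ∀ a : A, (∀ j (v : V j), a • v = 0) → a = 0) :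
    Function.Injective (centralizerToPiEnd B U V) := by
  refine (injective_iff_map_eq_zero _).mpr fun c hc =>
    Subtype.ext <| hV_faithful _ fun j v => ?_
  have hc_j : Module.toModuleEnd B (V j) c = 0 :=
    IsSemisimpleModule.eq_zero_of_forall_comp_eq_zero U hU fun i f => by
      by_cases hf : f = 0
      · simp [hf]
      · exact congr($hc ⟨(i, j), f, hf⟩ f)
  exact congr($hc_j v)

theorem centralizerToPiEnd_surjective [IsAlgClosed k] [IsSemisimpleRing B] [Finite ιU] [Finite ιV]
    [∀ i, IsSimpleModule B (U i)] [∀ j, IsSimpleModule A (V j)] [∀ j, FiniteDimensional k (V j)]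
    (hU : Pairwise fun i i' => ∀ f : U i →ₗ[B] U i', f = 0)
    (hV : Pairwise fun j j' => ∀ f : V j →ₗ[A] V j', f = 0)
    (hV_faithful : ∀ a : A, (∀ j (v : V j), a • v = 0) → a = 0) :
    Function.Surjective (centralizerToPiEnd B U V) := by
  intro g
  have hT (j : ιV) : ∃ T : End B (V j), ∀ i (hi : ∃ f : U i →ₗ[B] V j, f ≠ 0) f,
      T • f = g ⟨(i, j), hi⟩ f := by
    have (i : {i // ∃ f : U i →ₗ[B] V j, f ≠ 0}) : Nontrivial (U i.1 →ₗ[B] V j) :=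
      let ⟨f, hf⟩ := i.2; nontrivial_of_ne f 0 hf
    have key := IsSemisimpleModule.exists_smul_eq_pi_linearMap (k := k) (V := V j)
      (fun i : {i // ∃ f : U i →ₗ[B] V j, f ≠ 0} => U i.1)
      (fun _ _ hii' => hU fun h => hii' (Subtype.ext h))
    obtain ⟨T, hT⟩ := key fun i => g ⟨(i.1, j), i.2⟩
    exact ⟨T, fun i hi => hT ⟨i, hi⟩⟩
  choose T hT using hT
  obtain ⟨a, ha⟩ := IsSimpleModule.exists_smul_eq_pi (k := k) hV fun j => (T j).restrictScalars k
  have ha_mem : a ∈ centralizer k (B : Set A) := by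
    refine (mem_centralizer_iff k).mpr fun b hb => sub_eq_zero.mp (hV_faithful _ fun j v => ?_)
    rw [sub_smul, mul_smul, mul_smul, ha, ha, sub_eq_zero]
    exact ((T j).map_smul ⟨b, hb⟩ v).symm
  refine ⟨⟨a, ha_mem⟩, funext fun p => LinearMap.ext fun f => LinearMap.ext fun u => ?_⟩
  exact (ha _ _).trans congr($(hT p.1.2 p.1.1 p.2 f) u)

end Subalgebra

theorem centralizer_iso_sum_end_hom_general
    {A : Type*} [Ring A] [Algebra ℂ A] [FiniteDimensional ℂ A] [IsSemisimpleRing A]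
    (B : Subalgebra ℂ A) [IsSemisimpleRing B]
    {ιU ιV : Type} [Fintype ιU] [Fintype ιV]
    (U : ιU → Type) [∀ i, AddCommGroup (U i)]
    [∀ i, Module B (U i)]
    [∀ i, IsSimpleModule B (U i)]
    (hUpair : ∀ i j, i ≠ j → ¬ Nonempty (U i ≃ₗ[B] U j))
    (hUcompl : ∀ (W : Type) [AddCommGroup W] [Module B W],
      IsSimpleModule B W → ∃ i, Nonempty (U i ≃ₗ[B] W))
    (V : ιV → Type) [∀ j, AddCommGroup (V j)] [∀ j, Module ℂ (V j)]
    [∀ j, Module A (V j)] [∀ j, IsScalarTower ℂ A (V j)] [∀ j, SMulCommClass B ℂ (V j)]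
    [∀ j, IsSimpleModule A (V j)]
    (hVpair : ∀ i j, i ≠ j → ¬ Nonempty (V i ≃ₗ[A] V j))
    (hVcompl : ∀ (W : Type) [AddCommGroup W] [Module A W],
      IsSimpleModule A W → ∃ j, Nonempty (V j ≃ₗ[A] W)) :
    Nonempty ((Subalgebra.centralizer ℂ (B : Set A)) ≃ₐ[ℂ]
      ((p : {p : ιU × ιV // ∃ f : U p.1 →ₗ[B] V p.2, f ≠ 0}) →
        Module.End ℂ (U p.1.1 →ₗ[B] V p.1.2))) ∧
    IsSemisimpleRing (Subalgebra.centralizer ℂ (B : Set A)) := by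
  have : Small.{0} A := Module.Finite.small ℂ A
  have (j : ιV) : FiniteDimensional ℂ (V j) := Module.Finite.trans A (V j)
  have hV_faithful := IsSemisimpleRing.eq_zero_of_forall_smul_eq_zero V hVcompl
  have hΦ : Function.Bijective (Subalgebra.centralizerToPiEnd B U V) :=
    ⟨Subalgebra.centralizerToPiEnd_injective hUcompl hV_faithful,
      Subalgebra.centralizerToPiEnd_surjective
        (fun i i' h => IsSimpleModule.eq_zero_of_not_nonempty_linearEquiv (hUpair i i' h))
        (fun j j' h => IsSimpleModule.eq_zero_of_not_nonempty_linearEquiv (hVpair j j' h))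
        hV_faithful⟩
  have (p : {p : ιU × ιV // ∃ f : U p.1 →ₗ[B] V p.2, f ≠ 0}) :
      IsSemisimpleRing (End ℂ (U p.1.1 →ₗ[B] V p.1.2)) :=
    have := LinearMap.finiteDimensional_of_isSimpleModule (k := ℂ) (B := B) (U := U p.1.1)
      (V := V p.1.2)
    .moduleEnd ℂ _
  exact ⟨⟨.ofBijective _ hΦ⟩, (AlgEquiv.ofBijective _ hΦ).toRingEquiv.symm.isSemisimpleRing⟩

/-- Let `A` be a finite-dimensional semisimple `ℂ`-algebra and `B ⊆ A`
a semisimple subalgebra.  Then the centralizer `Z_B(A)` is isomorphic as a `ℂ`-algebra to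
`⊕_{(U,V)} End(Hom_B(U,V))`, the sum over pairs of a simple `B`-module `U` and a simple
`A`-module `V` with `Hom_B(U,V) ≠ 0`; in particular `Z_B(A)` is semisimple. -/
theorem centralizer_iso_sum_end_hom
    {A : Type*} [Ring A] [Algebra ℂ A] [FiniteDimensional ℂ A] [IsSemisimpleRing A]
    (B : Subalgebra ℂ A) [IsSemisimpleRing B]
    {ιU ιV : Type} [Fintype ιU] [Fintype ιV]
    (U : ιU → Type) [∀ i, AddCommGroup (U i)] [∀ i, Module ℂ (U i)]
    [∀ i, Module B (U i)] [∀ i, IsScalarTower ℂ B (U i)] [∀ i, SMulCommClass B ℂ (U i)]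
    [∀ i, IsSimpleModule B (U i)]
    (hUpair : ∀ i j, i ≠ j → ¬ Nonempty (U i ≃ₗ[B] U j))
    (hUcompl : ∀ (W : Type) [AddCommGroup W] [Module B W],
      IsSimpleModule B W → ∃ i, Nonempty (U i ≃ₗ[B] W))
    (V : ιV → Type) [∀ j, AddCommGroup (V j)] [∀ j, Module ℂ (V j)]
    [∀ j, Module A (V j)] [∀ j, IsScalarTower ℂ A (V j)] [∀ j, SMulCommClass B ℂ (V j)]
    [∀ j, IsSimpleModule A (V j)]
    (hVpair : ∀ i j, i ≠ j → ¬ Nonempty (V i ≃ₗ[A] V j))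
    (hVcompl : ∀ (W : Type) [AddCommGroup W] [Module A W],
      IsSimpleModule A W → ∃ j, Nonempty (V j ≃ₗ[A] W)) :
    Nonempty ((Subalgebra.centralizer ℂ (B : Set A)) ≃ₐ[ℂ]
      ((p : {p : ιU × ιV // ∃ f : U p.1 →ₗ[B] V p.2, f ≠ 0}) →
        Module.End ℂ (U p.1.1 →ₗ[B] V p.1.2))) ∧
    IsSemisimpleRing (Subalgebra.centralizer ℂ (B : Set A)) :=
  centralizer_iso_sum_end_hom_general B U hUpair hUcompl V hVpair hVcompl
end

section
/- Let G be a finite group and σ ∈ Aut(G) of order m. For ρ ∈ Irr(G) fixed by σ (i.e., ρ ∘ σ ≅ ρ), define the twisted character χ̃_ρ : G → ℂ by χ̃_ρ(g) = χ_{ρ̃}(g, σ), where ρ̃ is an extension of ρ to G̃ = G ⋊ ⟨σ⟩. Then for ρ₁, ρ₂ ∈ Irr(G)^{⟨σ⟩}: (1/|G|) Σ_{g ∈ G} χ̃_{ρ₁}(g) · conj(χ̃_{ρ₂}(g)) equals 1 if ρ₁ ≅ ρ₂ and 0 otherwise (with suitable compatible choices of extensions in the case ρ₁ ≅ ρ₂).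 -/
/-!
Write `x = (1, σ)`, so that the twisted characters are the characters of `ρ₁'` and `ρ₂'` on the
coset `G x`. Since the eigenvalues of `ρ₂' y` are roots of unity, `conj (χ₂' y) = χ₂' y⁻¹`, and
`χ₁' y · χ₂' y⁻¹` is the character of `Hom(V₂, V₁)` at `y`. Summing a character `χ_π` over `G x`
gives `|G| · tr (P ∘ π x)`, with `P` the averaging projection onto the `G`-invariants. For
`π = Hom(V₂, V₁)` these invariants are the `G`-intertwiners `V₂ → V₁`: by Schur's lemma there are
none when `ρ₁ ≇ ρ₂`, and when `ρ₁' ≅ ρ₂'` (so that we may take `ρ₂' = ρ₁'`) they are the scalars,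
which `π x` fixes. In both cases `tr (P ∘ π x) = tr P = dim Hom_G(V₂, V₁)`.
-/

open LinearMap Module

namespace Module.End

variable {K V : Type*} [Field K] [AddCommGroup V] [Module K V]

theorem pow_eq_one_of_maxGenEigenspace_ne_bot {u : End K V} {n : ℕ} (hu : u ^ n = 1) {μ : K}
    (hμ : u.maxGenEigenspace μ ≠ ⊥) : μ ^ n = 1 := by
  have hμ' : u.HasEigenvalue μ := (hasUnifEigenvalue_iff_hasUnifEigenvalue_one (by simp)).mp hμ
  obtain ⟨v, hv⟩ := (hμ'.pow n).exists_hasEigenvector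
  have hfix : μ ^ n • v = (1 : K) • v := by rw [← hv.apply_eq_smul, hu, one_smul, one_apply]
  exact smul_left_injective K hv.2 hfix

variable [FiniteDimensional K V]

theorem trace_pow_of_isNilpotent_sub_algebraMap {a : End K V} {μ : K}
    (h : IsNilpotent (a - algebraMap K (End K V) μ)) (k : ℕ) :
    trace K V (a ^ k) = μ ^ k * finrank K V := by
  induction k with
  | zero => simp
  | succ k ih =>
    rw [pow_succ, mul_eq_comp,
      trace_comp_eq_mul_of_commute_of_isNilpotent μ ((Commute.refl a).pow_left k) h, ih]
    ring

theorem trace_pow_eq_sum_maxGenEigenspace [IsAlgClosed K] [DecidableEq K] (u : End K V)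
    (hfin : {μ | u.maxGenEigenspace μ ≠ ⊥}.Finite) (k : ℕ) :
    trace K V (u ^ k) = ∑ μ ∈ hfin.toFinset, μ ^ k * finrank K (u.maxGenEigenspace μ) := by
  rw [trace_eq_sum_trace_restrict' (DirectSum.isInternal_submodule_of_iSupIndep_of_iSup_eq_top
    u.independent_maxGenEigenspace u.iSup_maxGenEigenspace_eq_top) hfin
    (fun μ ↦ u.mapsTo_maxGenEigenspace_of_comm ((Commute.refl u).pow_right k) μ)]
  refine Finset.sum_congr rfl fun μ _ ↦ ?_
  rw [← pow_restrict k (u.mapsTo_maxGenEigenspace_of_comm rfl μ)]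
  exact trace_pow_of_isNilpotent_sub_algebraMap
    (u.isNilpotent_restrict_maxGenEigenspace_sub_algebraMap μ) k

theorem conj_trace_eq_trace_pow_pred {V : Type*} [AddCommGroup V] [Module ℂ V]
    [FiniteDimensional ℂ V] {u : End ℂ V} {n : ℕ} (hn : n ≠ 0) (hu : u ^ n = 1) :
    starRingEnd ℂ (trace ℂ V u) = trace ℂ V (u ^ (n - 1)) := by
  classical
  have hfin := WellFoundedGT.finite_ne_bot_of_iSupIndep u.independent_maxGenEigenspace
  rw [← pow_one u, trace_pow_eq_sum_maxGenEigenspace u hfin, pow_one,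
    trace_pow_eq_sum_maxGenEigenspace u hfin, map_sum]
  refine Finset.sum_congr rfl fun μ hμ ↦ ?_
  have hμn : μ ^ n = 1 := pow_eq_one_of_maxGenEigenspace_ne_bot hu (hfin.mem_toFinset.mp hμ)
  have hμinv : μ ^ (n - 1) = μ⁻¹ := eq_inv_of_mul_eq_one_left (by rw [pow_sub_one_mul hn, hμn])
  rw [map_mul, map_natCast, pow_one, hμinv,
    Complex.inv_eq_conj (Complex.norm_eq_one_of_pow_eq_one hμn hn)]

end Module.End

namespace Representation

section

variable {k G V : Type*} [Field k] [Monoid G] [AddCommGroup V] [Module k V] [Nontrivial V]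

theorem isIrreducible_of_forall_submodule (ρ : Representation k G V)
    (h : ∀ W : Submodule k V, (∀ g : G, ∀ w ∈ W, ρ g w ∈ W) → W = ⊥ ∨ W = ⊤) :
    IsIrreducible ρ where
  exists_pair_ne := ⟨⊥, ⊤, fun h' ↦ bot_ne_top (congrArg Subrepresentation.toSubmodule h')⟩
  eq_bot_or_eq_top W := (h W.toSubmodule fun g _ hw ↦ W.apply_mem_toSubmodule g hw).imp
    (fun hW ↦ Subrepresentation.toSubmodule_injective hW)
    (fun hW ↦ Subrepresentation.toSubmodule_injective hW)

end

theorem conj_character_eq_character_inv {K V : Type*} [Group K] [AddCommGroup V] [Module ℂ V]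
    [FiniteDimensional ℂ V] (ρ : Representation ℂ K V) {x : K} (hx : IsOfFinOrder x) :
    starRingEnd ℂ (ρ.character x) = ρ.character x⁻¹ := by
  have hn : orderOf x ≠ 0 := hx.orderOf_pos.ne'
  have hinv : x ^ (orderOf x - 1) = x⁻¹ :=
    eq_inv_of_mul_eq_one_left (by rw [pow_sub_one_mul hn, pow_orderOf_eq_one])
  rw [character, Module.End.conj_trace_eq_trace_pow_pred hn
    (by rw [← map_pow, pow_orderOf_eq_one, map_one]), ← map_pow, hinv, character]

variable {k G K : Type*} [Field k] [Group G] [Group K]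

theorem linHom_comp {V W : Type*} [AddCommGroup V] [Module k V] [AddCommGroup W] [Module k W]
    (ρ : Representation k K V) (σ : Representation k K W) (ι : G →* K) :
    (linHom ρ σ).comp ι = linHom (ρ.comp ι) (σ.comp ι) := by
  ext
  simp [linHom_apply]

variable [Fintype G] [Invertible (Fintype.card G : k)]

theorem card_inv_mul_sum_char_coset_eq_finrank {U : Type*} [AddCommGroup U] [Module k U]
    [FiniteDimensional k U] (π : Representation k K U) (ι : G →* K) (x : K)
    (hx : ∀ v ∈ invariants (π.comp ι), π x v = v) :
    (Fintype.card G : k)⁻¹ * ∑ g : G, π.character (ι g * x) =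
      finrank k (invariants (π.comp ι)) := by
  have hfix : π x * averageMap (π.comp ι) = averageMap (π.comp ι) :=
    LinearMap.ext fun v ↦ hx _ (averageMap_invariant _ v)
  have havg : averageMap (π.comp ι) = ⅟(Fintype.card G : k) • ∑ g : G, π (ι g) := by
    simp [GroupAlgebra.average, _root_.map_sum]
  calc (Fintype.card G : k)⁻¹ * ∑ g : G, π.character (ι g * x)
      = trace k U (averageMap (π.comp ι) * π x) := by
        rw [havg, smul_mul_assoc, map_smul, Finset.sum_mul, _root_.map_sum, smul_eq_mul,
          invOf_eq_inv]
        simp only [character, map_mul]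
    _ = trace k U (averageMap (π.comp ι)) := by rw [trace_mul_comm, hfix]
    _ = finrank k (invariants (π.comp ι)) := (isProj_averageMap _).trace

theorem card_inv_mul_sum_char_mul_char_inv_coset_eq_finrank {V W : Type*}
    [AddCommGroup V] [Module k V] [FiniteDimensional k V]
    [AddCommGroup W] [Module k W] [FiniteDimensional k W]
    (ρ : Representation k K V) (σ : Representation k K W) (ι : G →* K) (x : K)
    (hx : ∀ f : IntertwiningMap (ρ.comp ι) (σ.comp ι),
      σ x ∘ₗ f.toLinearMap ∘ₗ ρ x⁻¹ = f.toLinearMap) :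
    (Fintype.card G : k)⁻¹ * ∑ g : G, σ.character (ι g * x) * ρ.character (ι g * x)⁻¹ =
      finrank k (IntertwiningMap (ρ.comp ι) (σ.comp ι)) := by
  let e := invariantsEquivIntertwiningMap (ρ.comp ι) (σ.comp ι)
  simp_rw [mul_comm (σ.character _), ← char_linHom]
  rw [card_inv_mul_sum_char_coset_eq_finrank (linHom ρ σ) ι x
    fun f hf ↦ by rw [linHom_apply]; exact hx (e ⟨f, linHom_comp ρ σ ι ▸ hf⟩),
    linHom_comp, e.finrank_eq]

end Representation

open Representation in
theorem twisted_orthogonality_finite_group_general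
    {G : Type*} [Group G] [Fintype G]
    (σ : MulAut G)
    {V₁ V₂ : Type*}
    [AddCommGroup V₁] [Module ℂ V₁] [FiniteDimensional ℂ V₁] [Nontrivial V₁]
    [AddCommGroup V₂] [Module ℂ V₂] [FiniteDimensional ℂ V₂] [Nontrivial V₂]
    (ρ₁ : Representation ℂ G V₁) (ρ₂ : Representation ℂ G V₂)
    (hirr₁ : ∀ W : Submodule ℂ V₁, (∀ g : G, ∀ w ∈ W, ρ₁ g w ∈ W) → W = ⊥ ∨ W = ⊤)
    (hirr₂ : ∀ W : Submodule ℂ V₂, (∀ g : G, ∀ w ∈ W, ρ₂ g w ∈ W) → W = ⊥ ∨ W = ⊤)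
    (ρ₁' : Representation ℂ (G ⋊[(Subgroup.zpowers σ).subtype] ↥(Subgroup.zpowers σ)) V₁)
    (ρ₂' : Representation ℂ (G ⋊[(Subgroup.zpowers σ).subtype] ↥(Subgroup.zpowers σ)) V₂)
    (hext₁ : ∀ g : G, ρ₁' (SemidirectProduct.inl g) = ρ₁ g)
    (hext₂ : ∀ g : G, ρ₂' (SemidirectProduct.inl g) = ρ₂ g) :
    ((¬ ∃ e : V₁ ≃ₗ[ℂ] V₂, ∀ (g : G) (x : V₁), e (ρ₁ g x) = ρ₂ g (e x)) →
      (1 / (Fintype.card G : ℂ)) * ∑ g : G,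
        (LinearMap.trace ℂ V₁
          (ρ₁' (SemidirectProduct.inl g *
            SemidirectProduct.inr ⟨σ, Subgroup.mem_zpowers σ⟩))) *
        starRingEnd ℂ (LinearMap.trace ℂ V₂
          (ρ₂' (SemidirectProduct.inl g *
            SemidirectProduct.inr ⟨σ, Subgroup.mem_zpowers σ⟩))) = 0) ∧
    ((∃ e : V₁ ≃ₗ[ℂ] V₂,
        ∀ (x : G ⋊[(Subgroup.zpowers σ).subtype] ↥(Subgroup.zpowers σ)) (y : V₁),
          e (ρ₁' x y) = ρ₂' x (e y)) →
      (1 / (Fintype.card G : ℂ)) * ∑ g : G,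
        (LinearMap.trace ℂ V₁
          (ρ₁' (SemidirectProduct.inl g *
            SemidirectProduct.inr ⟨σ, Subgroup.mem_zpowers σ⟩))) *
        starRingEnd ℂ (LinearMap.trace ℂ V₂
          (ρ₂' (SemidirectProduct.inl g *
            SemidirectProduct.inr ⟨σ, Subgroup.mem_zpowers σ⟩))) = 1) := by
  set ι := SemidirectProduct.inl (φ := (Subgroup.zpowers σ).subtype)
  set s := SemidirectProduct.inr (φ := (Subgroup.zpowers σ).subtype) ⟨σ, Subgroup.mem_zpowers σ⟩
  obtain rfl : ρ₁'.comp ι = ρ₁ := MonoidHom.ext hext₁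
  obtain rfl : ρ₂'.comp ι = ρ₂ := MonoidHom.ext hext₂
  have : Finite (G ⋊[(Subgroup.zpowers σ).subtype] ↥(Subgroup.zpowers σ)) :=
    Finite.of_equiv _ SemidirectProduct.equivProd.symm
  have : Invertible (Fintype.card G : ℂ) := invertibleOfNonzero (by simp)
  have hconj (y) : starRingEnd ℂ (ρ₂'.character y) = ρ₂'.character y⁻¹ :=
    conj_character_eq_character_inv ρ₂' (isOfFinOrder_of_finite y)
  have hsum : (1 / (Fintype.card G : ℂ)) * ∑ g : G, ρ₁'.character (ι g * s) *
        starRingEnd ℂ (ρ₂'.character (ι g * s)) =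
      (Fintype.card G : ℂ)⁻¹ * ∑ g : G, ρ₁'.character (ι g * s) * ρ₂'.character (ι g * s)⁻¹ := by
    simp only [one_div, hconj]
  refine ⟨fun hne ↦ ?_, fun ⟨e, he⟩ ↦ ?_⟩
  · have := isIrreducible_of_forall_submodule _ hirr₁
    have := isIrreducible_of_forall_submodule _ hirr₂
    have : IsEmpty (Equiv (ρ₂'.comp ι) (ρ₁'.comp ι)) :=
      ⟨fun φ ↦ hne ⟨φ.symm.toLinearEquiv, φ.symm.isIntertwining⟩⟩
    refine hsum.trans ?_
    rw [card_inv_mul_sum_char_mul_char_inv_coset_eq_finrank ρ₂' ρ₁' ι s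
      fun f ↦ by simp [Subsingleton.elim f 0], finrank_zero_of_subsingleton, Nat.cast_zero]
  · have := isIrreducible_of_forall_submodule _ hirr₁
    have hχ : ρ₁'.character = ρ₂'.character :=
      char_iso (Representation.Equiv.mk e fun y ↦ LinearMap.ext (he y))
    refine hsum.trans ?_
    rw [← hχ, card_inv_mul_sum_char_mul_char_inv_coset_eq_finrank ρ₁' ρ₁' ι s ?_,
      IsIrreducible.finrank_intertwiningMap_self, Nat.cast_one]
    intro f
    obtain ⟨c, rfl⟩ := IsIrreducible.algebraMap_intertwiningMap_bijective_of_isAlgClosed.2 f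
    ext v
    simp

/-- Twisted orthogonality for a finite group `G` with `σ ∈ Aut(G)` of
order `m`.  For σ-fixed irreducibles `ρ₁, ρ₂` with chosen extensions `ρ̃₁, ρ̃₂` to
`G̃ = G ⋊ ⟨σ⟩`, the twisted characters `χ̃ᵢ(g) = χ_{ρ̃ᵢ}(g, σ)` satisfy
`(1/|G|) ∑_g χ̃₁(g)·conj(χ̃₂(g)) = 0` if `ρ₁ ≇ ρ₂`, and `= 1` if the extensions are
isomorphic (the compatible choice in the case `ρ₁ ≅ ρ₂`). -/
theorem twisted_orthogonality_finite_group
    {G : Type*} [Group G] [Fintype G]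
    {m : ℕ} (hm : 0 < m) (σ : MulAut G) (hσ : orderOf σ = m)
    {V₁ V₂ : Type*}
    [AddCommGroup V₁] [Module ℂ V₁] [FiniteDimensional ℂ V₁] [Nontrivial V₁]
    [AddCommGroup V₂] [Module ℂ V₂] [FiniteDimensional ℂ V₂] [Nontrivial V₂]
    (ρ₁ : Representation ℂ G V₁) (ρ₂ : Representation ℂ G V₂)
    (hirr₁ : ∀ W : Submodule ℂ V₁, (∀ g : G, ∀ w ∈ W, ρ₁ g w ∈ W) → W = ⊥ ∨ W = ⊤)
    (hirr₂ : ∀ W : Submodule ℂ V₂, (∀ g : G, ∀ w ∈ W, ρ₂ g w ∈ W) → W = ⊥ ∨ W = ⊤)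
    (ρ₁' : Representation ℂ (G ⋊[(Subgroup.zpowers σ).subtype] ↥(Subgroup.zpowers σ)) V₁)
    (ρ₂' : Representation ℂ (G ⋊[(Subgroup.zpowers σ).subtype] ↥(Subgroup.zpowers σ)) V₂)
    (hext₁ : ∀ g : G, ρ₁' (SemidirectProduct.inl g) = ρ₁ g)
    (hext₂ : ∀ g : G, ρ₂' (SemidirectProduct.inl g) = ρ₂ g) :
    ((¬ ∃ e : V₁ ≃ₗ[ℂ] V₂, ∀ (g : G) (x : V₁), e (ρ₁ g x) = ρ₂ g (e x)) →
      (1 / (Fintype.card G : ℂ)) * ∑ g : G,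
        (LinearMap.trace ℂ V₁
          (ρ₁' (SemidirectProduct.inl g *
            SemidirectProduct.inr ⟨σ, Subgroup.mem_zpowers σ⟩))) *
        starRingEnd ℂ (LinearMap.trace ℂ V₂
          (ρ₂' (SemidirectProduct.inl g *
            SemidirectProduct.inr ⟨σ, Subgroup.mem_zpowers σ⟩))) = 0) ∧
    ((∃ e : V₁ ≃ₗ[ℂ] V₂,
        ∀ (x : G ⋊[(Subgroup.zpowers σ).subtype] ↥(Subgroup.zpowers σ)) (y : V₁),
          e (ρ₁' x y) = ρ₂' x (e y)) →
      (1 / (Fintype.card G : ℂ)) * ∑ g : G,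
        (LinearMap.trace ℂ V₁
          (ρ₁' (SemidirectProduct.inl g *
            SemidirectProduct.inr ⟨σ, Subgroup.mem_zpowers σ⟩))) *
        starRingEnd ℂ (LinearMap.trace ℂ V₂
          (ρ₂' (SemidirectProduct.inl g *
            SemidirectProduct.inr ⟨σ, Subgroup.mem_zpowers σ⟩))) = 1) :=
  twisted_orthogonality_finite_group_general σ ρ₁ ρ₂ hirr₁ hirr₂ ρ₁' ρ₂' hext₁ hext₂
end

section
/- Let A be a ℤ/mℤ-graded Frobenius ⋆-algebra with symmetric bimodule isomorphism φ: A → A*, φ(a) = λ(−·a). Then φ⁻¹ maps the space of twisted class functionals cf_{A₀}(A₁) = {γ ∈ A₁* : γ(am) = γ(ma) for all a ∈ A₀, m ∈ A₁} (extended by zero to A) bijectively onto the centralizer Z_{A₀}(A_{−1}) = {x ∈ A_{−1} : xb = bx for all b ∈ A₀}. -/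
/-!
Pair `A` with itself by `(x, w) ↦ λ(x w)`; `φ` being injective says this pairing is
nondegenerate. Since `λ` lives in degree `0`, a homogeneous `x ∈ A_r` only sees the component
`w_{-r}` of `w`, so `φ w` vanishes off degree `1` exactly when `w = w_{-1}`. Since `λ` is a trace
against `A₀`, `λ(a x w) = λ(x w a)` for `a ∈ A₀`, so the twisted class condition on `φ w` says
that `λ(x (w a − a w)) = 0` for all `x`, i.e. `w a = a w`.
-/

open DirectSum

namespace GradedAlgebra

variable {ι R A : Type*} [DecidableEq ι] [AddGroup ι] [CommSemiring R] [Semiring A]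
  [Algebra R A] {𝒜 : ι → Submodule R A} [GradedAlgebra 𝒜] {l : A →ₗ[R] R}

variable (𝒜) in
theorem linearMap_ext_of_homogeneous {M : Type*} [AddCommMonoid M] [Module R M]
    {f g : A →ₗ[R] M} (h : ∀ i, ∀ x ∈ 𝒜 i, f x = g x) : f = g :=
  decompose_lhom_ext 𝒜 fun i => LinearMap.ext fun x => h i x x.2

section DegreeZero

variable (hl : ∀ i ≠ 0, ∀ a ∈ 𝒜 i, l a = 0)
include hl

theorem apply_mul_eq_zero_of_add_ne_zero {i j : ι} {x y : A} (hx : x ∈ 𝒜 i) (hy : y ∈ 𝒜 j)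
    (hij : i + j ≠ 0) : l (x * y) = 0 :=
  hl _ hij _ (SetLike.mul_mem_graded hx hy)

theorem apply_mul_eq_apply_mul_proj_neg {i : ι} {x : A} (hx : x ∈ 𝒜 i) (y : A) :
    l (x * y) = l (x * proj 𝒜 (-i) y) := by
  suffices l ∘ₗ LinearMap.mulLeft R x = l ∘ₗ LinearMap.mulLeft R x ∘ₗ proj 𝒜 (-i) from
    LinearMap.congr_fun this y
  refine linearMap_ext_of_homogeneous 𝒜 fun j y hy => ?_
  by_cases hj : j = -i
  · subst hj
    simp [decompose_of_mem_same 𝒜 hy]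
  · have hij : i + j ≠ 0 := fun h => hj (neg_eq_of_add_eq_zero_right h).symm
    simp [decompose_of_mem_ne 𝒜 hy hj, apply_mul_eq_zero_of_add_ne_zero hl hx hy hij]

theorem apply_mul_comm_of_mem_zero (hcl : ∀ a ∈ 𝒜 0, ∀ b ∈ 𝒜 0, l (a * b) = l (b * a))
    {b : A} (hb : b ∈ 𝒜 0) (w : A) : l (b * w) = l (w * b) := by
  suffices l ∘ₗ LinearMap.mulLeft R b = l ∘ₗ LinearMap.mulRight R b from
    LinearMap.congr_fun this w
  refine linearMap_ext_of_homogeneous 𝒜 fun i w hw => ?_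
  by_cases hi : i = 0
  · subst hi
    exact hcl b hb w hw
  · simp only [LinearMap.comp_apply, LinearMap.mulLeft_apply, LinearMap.mulRight_apply]
    rw [hl i hi _ (by simpa using SetLike.mul_mem_graded hb hw),
      hl i hi _ (by simpa using SetLike.mul_mem_graded hw hb)]

variable (hnd : ∀ w w' : A, (∀ x, l (x * w) = l (x * w')) → w = w')
include hnd

theorem forall_apply_mul_eq_zero_iff_mem (d : ι) (w : A) :
    (∀ r ≠ d, ∀ x ∈ 𝒜 r, l (x * w) = 0) ↔ w ∈ 𝒜 (-d) := by
  have hne {r : ι} (hr : r ≠ d) : r + -d ≠ 0 := by rwa [← sub_eq_add_neg, sub_ne_zero]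
  refine ⟨fun h => ?_, fun hw r hr x hx => apply_mul_eq_zero_of_add_ne_zero hl hx hw (hne hr)⟩
  have hproj : proj 𝒜 (-d) w ∈ 𝒜 (-d) := SetLike.coe_mem _
  suffices l ∘ₗ LinearMap.mulRight R w = l ∘ₗ LinearMap.mulRight R (proj 𝒜 (-d) w) from
    hnd _ _ (LinearMap.congr_fun this) ▸ hproj
  refine linearMap_ext_of_homogeneous 𝒜 fun r x hx => ?_
  by_cases hr : r = d
  · subst hr
    exact apply_mul_eq_apply_mul_proj_neg hl hx w
  · simp only [LinearMap.comp_apply, LinearMap.mulRight_apply]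
    rw [h r hr x hx, apply_mul_eq_zero_of_add_ne_zero hl hx hproj (hne hr)]

theorem forall_apply_mul_mul_comm_iff (hcl : ∀ a ∈ 𝒜 0, ∀ b ∈ 𝒜 0, l (a * b) = l (b * a))
    {b : A} (hb : b ∈ 𝒜 0) (w : A) :
    (∀ x, l (b * x * w) = l (x * b * w)) ↔ w * b = b * w := by
  have hleft (x : A) : l (b * x * w) = l (x * (w * b)) := by
    rw [mul_assoc, apply_mul_comm_of_mem_zero hl hcl hb, mul_assoc]
  simp only [hleft, mul_assoc _ b w]
  exact ⟨hnd _ _, fun h x => by rw [h]⟩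

end DegreeZero

end GradedAlgebra

open GradedAlgebra in
theorem graded_frobenius_star_twisted_class_functionals_general
    {A : Type*} [Ring A] [Algebra ℂ A]
    {m : ℕ}
    (𝒜 : ZMod m → Submodule ℂ A) [GradedRing 𝒜]
    (l : A →ₗ[ℂ] ℂ)
    (hl0 : ∀ r : ZMod m, r ≠ 0 → ∀ a ∈ 𝒜 r, l a = 0)
    (hclass0 : ∀ a ∈ 𝒜 0, ∀ b ∈ 𝒜 0, l (a * b) = l (b * a))
    (φ : A ≃ₗ[ℂ] Module.Dual ℂ A)
    (hφ : ∀ a x : A, φ a x = l (x * a)) :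
    φ.symm '' {γ : Module.Dual ℂ A |
        (∀ r : ZMod m, r ≠ 1 → ∀ x ∈ 𝒜 r, γ x = 0) ∧
        (∀ a ∈ 𝒜 0, ∀ x : A, γ (a * x) = γ (x * a))} =
      {z : A | z ∈ 𝒜 (-1) ∧ ∀ b ∈ 𝒜 0, z * b = b * z} := by
  have hnd (w w' : A) (h : ∀ x, l (x * w) = l (x * w')) : w = w' :=
    φ.injective (LinearMap.ext fun x => by rw [hφ, hφ, h])
  rw [LinearEquiv.image_symm_eq_preimage]
  ext w
  simp only [Set.mem_preimage, Set.mem_ofPred_eq, hφ]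
  rw [forall_apply_mul_eq_zero_iff_mem hl0 hnd]
  exact and_congr_right fun _ =>
    forall₂_congr fun b hb => forall_apply_mul_mul_comm_iff hl0 hnd hclass0 hb w

/-- Let `A` be a `ℤ/mℤ`-graded Frobenius ⋆-algebra with symmetric
bimodule isomorphism `φ : A ≃ A*`, `φ(a) = λ(—·a)`.  Then `φ⁻¹` maps the space of
twisted class functionals on `A₁` (functionals on `A` vanishing in degrees `≠ 1` with
`γ(a·x) = γ(x·a)` for `a ∈ A₀`) bijectively onto the centralizer
`Z_{A₀}(A_{−1}) = {z ∈ A_{−1} : z·b = b·z for all b ∈ A₀}`. -/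
theorem graded_frobenius_star_twisted_class_functionals
    {A : Type*} [Ring A] [Algebra ℂ A] [FiniteDimensional ℂ A]
    {m : ℕ} [NeZero m]
    (𝒜 : ZMod m → Submodule ℂ A) [GradedRing 𝒜]
    (st : A → A)
    (hadd : ∀ a b : A, st (a + b) = st a + st b)
    (hinv : ∀ a : A, st (st a) = a)
    (hmul : ∀ a b : A, st (a * b) = st b * st a)
    (hsmul : ∀ (c : ℂ) (a : A), st (c • a) = (starRingEnd ℂ c) • st a)
    (hstgr : ∀ r : ZMod m, ∀ a ∈ 𝒜 r, st a ∈ 𝒜 (-r))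
    (l : A →ₗ[ℂ] ℂ)
    (hl0 : ∀ r : ZMod m, r ≠ 0 → ∀ a ∈ 𝒜 r, l a = 0)
    (hclass0 : ∀ a ∈ 𝒜 0, ∀ b ∈ 𝒜 0, l (a * b) = l (b * a))
    (hherm : ∀ a b : A, l (b * st a) = starRingEnd ℂ (l (a * st b)))
    (hpos : ∀ a : A, a ≠ 0 → 0 < (l (a * st a)).re)
    (φ : A ≃ₗ[ℂ] Module.Dual ℂ A)
    (hφ : ∀ a x : A, φ a x = l (x * a)) :
    φ.symm '' {γ : Module.Dual ℂ A |
        (∀ r : ZMod m, r ≠ 1 → ∀ x ∈ 𝒜 r, γ x = 0) ∧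
        (∀ a ∈ 𝒜 0, ∀ x : A, γ (a * x) = γ (x * a))} =
      {z : A | z ∈ 𝒜 (-1) ∧ ∀ b ∈ 𝒜 0, z * b = b * z} :=
  graded_frobenius_star_twisted_class_functionals_general 𝒜 l hl0 hclass0 φ hφ
end
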